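/- arXiv:1501.03584 — 2 statements merged into one kernel-verified Lean document; each statement's English description precedes it below -/
import Mathlib

section
/- The competitive erosion chain on Cyl_n has exactly one irreducible class. Moreover, any configuration σ ∈ Ω that contains a blocking set of blue vertices lying over a blocking set of red vertices is a transient state of the chain. -/
open scoped BigOperators Classical

namespace CE

/-- Vertices of the cylinder graph `Cyl_n = C_n × P_n`.  The first coordinate
`k : Fin n` represents the point `k/n` of the cycle `C_n = (1/n)ℤ/ℤ`, and the
second coordinate `j : Fin (n+1)` represents the point `j/n` of the path
`P_n = (1/n)ℤ ∩ [0,1]`. -/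
abbrev V (n : ℕ) := Fin n × Fin (n + 1)

/-- The number of edges joining `v` and `w` in the multigraph `Cyl_n`
(including the self-loop at each vertex of the top and bottom rows), making
`Cyl_n` 4-regular. -/
def edgeCount (n : ℕ) (v w : V n) : ℕ :=
  (if v.1 = w.1 then
      (if v.2.1 + 1 = w.2.1 then 1 else 0) + (if w.2.1 + 1 = v.2.1 then 1 else 0)
    else 0) +
  (if v.2 = w.2 then
      (if (v.1.1 + 1) % n = w.1.1 then 1 else 0) + (if (w.1.1 + 1) % n = v.1.1 then 1 else 0)
    else 0) +
  (if v = w ∧ (v.2.1 = 0 ∨ v.2.1 = n) then 1 else 0)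

/-- Adjacency in `Cyl_n` (self-loops do not count). -/
def Adj (n : ℕ) (v w : V n) : Prop := v ≠ w ∧ 0 < edgeCount n v w

/-- One-step transition probability of simple random walk on `Cyl_n`. -/
noncomputable def step (n : ℕ) (v w : V n) : ℝ := (edgeCount n v w : ℝ) / 4

/-- `exitProb n S v w` : the probability that simple random walk started at
`v` first visits `Sᶜ` at the vertex `w` (if `v ∉ S` the walk exits
immediately at `v`). -/
noncomputable def exitProb (n : ℕ) (S : Set (V n)) (v w : V n) : ℝ :=
  if v ∈ S then
    ∑' t : ℕ, ∑ q : Fin (t + 2) → V n,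
      if q 0 = v ∧ (∀ i : Fin (t + 1), q i.castSucc ∈ S) ∧
          q (Fin.last (t + 1)) = w ∧ w ∉ S then
        ∏ i : Fin (t + 1), step n (q i.castSucc) (q i.succ)
      else 0
  else if w = v then 1 else 0

/-- Configurations: `true` = blue (colour 1), `false` = red (colour 2). -/
abbrev Config (n : ℕ) := V n → Bool

/-- The number of blue vertices. -/
def blueCount (n : ℕ) (σ : Config n) : ℕ :=
  (Finset.univ.filter fun v : V n => σ v = true).card

/-- The state space `Ω` : configurations with exactly `⌊α ⬝ #Cyl_n⌋` blue
vertices. -/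
def memOmega (α : ℝ) (n : ℕ) (σ : Config n) : Prop :=
  blueCount n σ = ⌊α * ((n : ℝ) * (n + 1))⌋₊

def bottom (n : ℕ) (x : Fin n) : V n := (x, 0)

def top (n : ℕ) (x : Fin n) : V n := (x, Fin.last n)

def recolor (n : ℕ) (σ : Config n) (w : V n) (c : Bool) : Config n :=
  fun v => if v = w then c else σ v

/-- Probability that the blue walker (released uniformly on `C_n × {0}`)
converts the vertex `w` (the first red vertex it visits). -/
noncomputable def blueHalf (n : ℕ) (σ : Config n) (w : V n) : ℝ :=
  (1 / (n : ℝ)) * ∑ x : Fin n, exitProb n {v | σ v = true} (bottom n x) w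

/-- Probability that the red walker (released uniformly on `C_n × {1}`)
converts the vertex `w` (the first blue vertex it visits). -/
noncomputable def redHalf (n : ℕ) (σ : Config n) (w : V n) : ℝ :=
  (1 / (n : ℝ)) * ∑ x : Fin n, exitProb n {v | σ v = false} (top n x) w

/-- Transition probability of one full step of the competitive erosion
chain: a blue walker converts a red vertex `w`, then a red walker converts a
blue vertex `w'` of the intermediate configuration. -/
noncomputable def K (n : ℕ) (σ σ'' : Config n) : ℝ :=
  ∑ w : V n, ∑ w' : V n,
    if σ'' = recolor n (recolor n σ w true) w' false then
      blueHalf n σ w * redHalf n (recolor n σ w true) w'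
    else 0

/-- `avoid n A t σ = P_σ(τ(A) ≥ t)` : probability that the chain started at
`σ` stays outside `A` at all times `0, 1, …, t − 1`. -/
noncomputable def avoid (n : ℕ) (A : Set (Config n)) : ℕ → Config n → ℝ
  | 0, _ => 1
  | t + 1, σ => if σ ∈ A then 0 else ∑ σ' : Config n, K n σ σ' * avoid n A t σ'

/-- `t`-step transition probabilities of the chain. -/
noncomputable def Kpow (n : ℕ) : ℕ → Config n → Config n → ℝ
  | 0, σ, σ' => if σ = σ' then 1 else 0
  | t + 1, σ, σ' => ∑ τ : Config n, Kpow n t σ τ * K n τ σ'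

/-- The height function `h(σ) = Σ_{(x,y) blue} (1 − y)`. -/
noncomputable def height (n : ℕ) (σ : Config n) : ℝ :=
  ∑ v : V n, if σ v = true then 1 - (v.2.1 : ℝ) / n else 0

/-- The expected one-step increment `E(h(σ₁) − h(σ₀) ∣ σ₀ = σ)`. -/
noncomputable def drift (n : ℕ) (σ : Config n) : ℝ :=
  ∑ σ' : Config n, K n σ σ' * (height n σ' - height n σ)

/-- `σ ∈ 𝒜_{ε,n}` : the blue set `S` satisfies
`C_n × [0, α−ε] ⊆ S ⊆ C_n × [0, α+ε]`. -/
def memA (α ε : ℝ) (n : ℕ) (σ : Config n) : Prop :=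
  (∀ v : V n, (v.2.1 : ℝ) / n ≤ α - ε → σ v = true) ∧
  (∀ v : V n, σ v = true → (v.2.1 : ℝ) / n ≤ α + ε)

/-- `σ ∈ 𝒢_ε` : the symmetric difference of the blue set and
`C_n × [0, α]` has at most `ε n²` sites. -/
def memG (α ε : ℝ) (n : ℕ) (σ : Config n) : Prop :=
  ((Finset.univ.filter fun v : V n =>
      ¬((σ v = true) ↔ (v.2.1 : ℝ) / n ≤ α)).card : ℝ) ≤ ε * (n : ℝ) ^ 2

/-- `σ ∈ Γ_ε` : the height function is within `ε n²` of its maximum value. -/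
def memGamma (α ε : ℝ) (n : ℕ) (σ : Config n) : Prop :=
  height n σ > (α * (1 - α / 2) - ε) * (n : ℝ) ^ 2

/-- `σ ∈ Ω_ε` : at most `ε n` heights `y ≤ α` contain a red vertex and at
most `ε n` heights `y ≥ α` contain a blue vertex. -/
def memOmegaEps (α ε : ℝ) (n : ℕ) (σ : Config n) : Prop :=
  ((Finset.univ.filter fun j : Fin (n + 1) =>
      (j.1 : ℝ) / n ≤ α ∧ ∃ x : Fin n, σ (x, j) = false).card : ℝ) ≤ ε * n ∧
  ((Finset.univ.filter fun j : Fin (n + 1) =>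
      (j.1 : ℝ) / n ≥ α ∧ ∃ x : Fin n, σ (x, j) = true).card : ℝ) ≤ ε * n

/-- A stationary distribution of the competitive erosion chain on `Ω`. -/
def IsStationary (α : ℝ) (n : ℕ) (π : Config n → ℝ) : Prop :=
  (∀ σ, 0 ≤ π σ) ∧ (∀ σ, π σ ≠ 0 → memOmega α n σ) ∧
  (∑ σ : Config n, π σ) = 1 ∧
  ∀ σ' : Config n, (∑ σ : Config n, π σ * K n σ σ') = π σ'

/-- The mass a distribution assigns to a set of configurations. -/
noncomputable def massOf (n : ℕ) (π : Config n → ℝ) (A : Set (Config n)) : ℝ :=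
  ∑ σ : Config n, if σ ∈ A then π σ else 0

/-- `R₁(σ)` : blue vertices reachable from `C_n × {0}` by a blue path. -/
def R1 (n : ℕ) (σ : Config n) : Set (V n) :=
  {v | ∃ u : V n, u.2.1 = 0 ∧ σ u = true ∧
    Relation.ReflTransGen (fun a b => Adj n a b ∧ σ b = true) u v}

/-- `R₂(σ)` : red vertices reachable from `C_n × {1}` by a red path. -/
def R2 (n : ℕ) (σ : Config n) : Set (V n) :=
  {v | ∃ u : V n, u.2.1 = n ∧ σ u = false ∧
    Relation.ReflTransGen (fun a b => Adj n a b ∧ σ b = false) u v}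

/-- `R̃₁(σ)` : vertices reachable from `C_n × {0}` by a blue path avoiding
`C_n × {1}`. -/
def tildeR1 (n : ℕ) (σ : Config n) : Set (V n) :=
  {v | ∃ u : V n, u.2.1 = 0 ∧ σ u = true ∧
    Relation.ReflTransGen (fun a b => Adj n a b ∧ σ b = true ∧ b.2.1 ≠ n) u v}

/-- `R̃₂(σ)` : vertices reachable from `C_n × {1}` by a red path avoiding
`C_n × {0}`. -/
def tildeR2 (n : ℕ) (σ : Config n) : Set (V n) :=
  {v | ∃ u : V n, u.2.1 = n ∧ σ u = false ∧
    Relation.ReflTransGen (fun a b => Adj n a b ∧ σ b = false ∧ b.2.1 ≠ 0) u v}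

/-- `H_A(v)` : the expected `y`-coordinate of the point at which simple
random walk started at `v` first exits `A`. -/
noncomputable def Hfun (n : ℕ) (A : Set (V n)) (v : V n) : ℝ :=
  ∑ w : V n, exitProb n A v w * ((w.2.1 : ℝ) / n)

/-- `y_k* = inf {y : (k, y) ∉ R̃₁}`. -/
noncomputable def ystar (n : ℕ) (σ : Config n) (k : Fin n) : ℝ :=
  sInf {y : ℝ | ∃ j : Fin (n + 1), (k, j) ∉ tildeR1 n σ ∧ y = (j.1 : ℝ) / n}

/-- `y_k** = sup {y : (k, y) ∉ R̃₂}`. -/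
noncomputable def ystarstar (n : ℕ) (σ : Config n) (k : Fin n) : ℝ :=
  sSup {y : ℝ | ∃ j : Fin (n + 1), (k, j) ∉ tildeR2 n σ ∧ y = (j.1 : ℝ) / n}

end CE

namespace CE

/-- `u` is connected to `v` inside the vertex set `S` (both endpoints and
the whole path lie in `S`). -/
def ReachIn (n : ℕ) (S : Set (V n)) (u v : V n) : Prop :=
  u ∈ S ∧ Relation.ReflTransGen (fun a b => Adj n a b ∧ b ∈ S) u v

/-- `A` is a blocking subset of `Cyl_n`: its complement is disconnected and
the bottom row minus `A` and the top row minus `A` lie in different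
components of the complement. -/
def Blocking (n : ℕ) (A : Set (V n)) : Prop :=
  (¬ ∀ u v : V n, u ∉ A → v ∉ A → ReachIn n Aᶜ u v) ∧
  ∀ u v : V n, u.2.1 = 0 → u ∉ A → v.2.1 = n → v ∉ A → ¬ ReachIn n Aᶜ u v

/-- For disjoint blocking sets, `A` is over `B`: `A` and the bottom row
minus `B` lie in different components of `Cyl_n \ B`, and `B` and the top
row minus `A` lie in different components of `Cyl_n \ A`. -/
def Over (n : ℕ) (A B : Set (V n)) : Prop :=
  (∀ a ∈ A, ∀ u : V n, u.2.1 = 0 → u ∉ B → ¬ ReachIn n Bᶜ a u) ∧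
  (∀ b ∈ B, ∀ v : V n, v.2.1 = n → v ∉ A → ¬ ReachIn n Aᶜ b v)

/-- `σ'` is accessible from `σ` for the competitive erosion chain. -/
def Accessible (n : ℕ) (σ σ' : Config n) : Prop := ∃ t : ℕ, 0 < Kpow n t σ σ'

/-- `σ` is a recurrent state of the competitive erosion chain on `Ω`
(a state of a finite chain is recurrent iff every state accessible from it
can access it back; otherwise it is transient). -/
def Recurrent (α : ℝ) (n : ℕ) (σ : Config n) : Prop :=
  memOmega α n σ ∧
  ∀ σ' : Config n, memOmega α n σ' → Accessible n σ σ' → Accessible n σ' σ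

end CE

section Basic
open CE Finset

variable {n : ℕ}

lemma step_nonneg (n : ℕ) (v w : V n) : 0 ≤ step n v w := by
  unfold step; positivity

lemma sum_pos_exists {ι : Type*} {s : Finset ι} {f : ι → ℝ}
    (h : 0 < ∑ i ∈ s, f i) : ∃ i ∈ s, 0 < f i := by
  apply Finset.exists_lt_of_sum_lt (f := fun _ => (0:ℝ))
  simpa using h

lemma sum_ite_le_one {ι : Type*} [Fintype ι] (P : ι → Prop) [DecidablePred P]
    (h : ∀ a b, P a → P b → a = b) :
    (∑ z : ι, if P z then (1:ℕ) else 0) ≤ 1 := by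
  rw [Finset.sum_boole, Nat.cast_id]
  apply Finset.card_le_one.2
  intro a ha b hb
  simp only [Finset.mem_filter] at ha hb
  exact h a b ha.2 hb.2

lemma ite_merge (c d e : Prop) [Decidable c] [Decidable d] [Decidable e] :
    (if c then (if d then (1:ℕ) else 0) + (if e then 1 else 0) else 0) =
      (if c ∧ d then 1 else 0) + (if c ∧ e then 1 else 0) := by
  split_ifs <;> simp_all

lemma edgeCount_eq (n : ℕ) (u z : V n) : edgeCount n u z =
    ((if u.1 = z.1 ∧ u.2.1 + 1 = z.2.1 then 1 else 0) +
     (if u.1 = z.1 ∧ z.2.1 + 1 = u.2.1 then 1 else 0)) +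
    ((if u.2 = z.2 ∧ (u.1.1 + 1) % n = z.1.1 then 1 else 0) +
     (if u.2 = z.2 ∧ (z.1.1 + 1) % n = u.1.1 then 1 else 0)) +
    (if u = z ∧ (u.2.1 = 0 ∨ u.2.1 = n) then 1 else 0) := by
  unfold edgeCount
  rw [ite_merge, ite_merge, ite_and]

lemma mod_succ_inj {a b m : ℕ} (ha : a < m) (hb : b < m)
    (h : (a + 1) % m = (b + 1) % m) : a = b := by
  rcases Nat.lt_or_ge (a+1) m with h1 | h1 <;> rcases Nat.lt_or_ge (b+1) m with h2 | h2
  · rw [Nat.mod_eq_of_lt h1, Nat.mod_eq_of_lt h2] at h; omega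
  · have hb1 : b + 1 = m := by omega
    rw [Nat.mod_eq_of_lt h1, hb1, Nat.mod_self] at h; omega
  · have ha1 : a + 1 = m := by omega
    rw [Nat.mod_eq_of_lt h2, ha1, Nat.mod_self] at h; omega
  · omega

lemma edge_row_sum_le (n : ℕ) (u : V n) : ∑ z : V n, edgeCount n u z ≤ 4 := by
  classical
  have hrw : ∑ z : V n, edgeCount n u z =
      ((∑ z : V n, if u.1 = z.1 ∧ u.2.1 + 1 = z.2.1 then 1 else 0) +
       (∑ z : V n, if u.1 = z.1 ∧ z.2.1 + 1 = u.2.1 then 1 else 0)) +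
      ((∑ z : V n, if u.2 = z.2 ∧ (u.1.1 + 1) % n = z.1.1 then 1 else 0) +
       (∑ z : V n, if u.2 = z.2 ∧ (z.1.1 + 1) % n = u.1.1 then 1 else 0)) +
      (∑ z : V n, if u = z ∧ (u.2.1 = 0 ∨ u.2.1 = n) then 1 else 0) := by
    simp only [edgeCount_eq, Finset.sum_add_distrib]
  rw [hrw]
  have hA : (∑ z : V n, if u.1 = z.1 ∧ u.2.1 + 1 = z.2.1 then (1:ℕ) else 0) ≤ 1 := by
    apply sum_ite_le_one
    rintro a b ⟨ha1, ha2⟩ ⟨hb1, hb2⟩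
    have : a.2 = b.2 := by ext; omega
    rw [Prod.ext_iff]; exact ⟨ha1.symm.trans hb1, this⟩
  have hB : (∑ z : V n, if u.1 = z.1 ∧ z.2.1 + 1 = u.2.1 then (1:ℕ) else 0) ≤ 1 := by
    apply sum_ite_le_one
    rintro a b ⟨ha1, ha2⟩ ⟨hb1, hb2⟩
    have : a.2 = b.2 := by ext; omega
    rw [Prod.ext_iff]; exact ⟨ha1.symm.trans hb1, this⟩
  have hC : (∑ z : V n, if u.2 = z.2 ∧ (u.1.1 + 1) % n = z.1.1 then (1:ℕ) else 0) ≤ 1 := by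
    apply sum_ite_le_one
    rintro a b ⟨ha1, ha2⟩ ⟨hb1, hb2⟩
    have : a.1 = b.1 := by ext; omega
    rw [Prod.ext_iff]; exact ⟨this, ha1.symm.trans hb1⟩
  have hD : (∑ z : V n, if u.2 = z.2 ∧ (z.1.1 + 1) % n = u.1.1 then (1:ℕ) else 0) ≤ 1 := by
    apply sum_ite_le_one
    rintro a b ⟨ha1, ha2⟩ ⟨hb1, hb2⟩
    have : a.1 = b.1 := by
      ext; exact mod_succ_inj a.1.2 b.1.2 (ha2.trans hb2.symm)
    rw [Prod.ext_iff]; exact ⟨this, ha1.symm.trans hb1⟩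
  have hE : (∑ z : V n, if u = z ∧ (u.2.1 = 0 ∨ u.2.1 = n) then (1:ℕ) else 0) ≤ 1 := by
    apply sum_ite_le_one
    rintro a b ⟨ha1, _⟩ ⟨hb1, _⟩
    rw [← ha1, ← hb1]
  -- case analysis
  rcases Nat.eq_zero_or_pos u.2.1 with h0 | h0
  · have hBz : (∑ z : V n, if u.1 = z.1 ∧ z.2.1 + 1 = u.2.1 then (1:ℕ) else 0) = 0 := by
      apply Finset.sum_eq_zero
      intro z _
      rw [if_neg]; rintro ⟨_, h⟩; omega
    omega
  rcases Nat.lt_or_ge u.2.1 n with h1 | h1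
  · have hEz : (∑ z : V n, if u = z ∧ (u.2.1 = 0 ∨ u.2.1 = n) then (1:ℕ) else 0) = 0 := by
      apply Finset.sum_eq_zero
      intro z _
      rw [if_neg]; rintro ⟨_, h | h⟩ <;> omega
    omega
  · have hu2 : u.2.1 = n := by have := u.2.2; omega
    have hAz : (∑ z : V n, if u.1 = z.1 ∧ u.2.1 + 1 = z.2.1 then (1:ℕ) else 0) = 0 := by
      apply Finset.sum_eq_zero
      intro z _
      rw [if_neg]; rintro ⟨_, h⟩; have := z.2.2; omega
    omega

lemma step_row_sum_le (n : ℕ) (u : V n) : ∑ z : V n, step n u z ≤ 1 := by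
  unfold step
  rw [← Finset.sum_div]
  rw [div_le_one (by norm_num)]
  have := edge_row_sum_le n u
  calc (∑ z : V n, (edgeCount n u z : ℝ)) = ((∑ z : V n, edgeCount n u z : ℕ) : ℝ) := by
        push_cast; ring
    _ ≤ 4 := by exact_mod_cast this

end Basic
section Paths
open CE Finset

lemma sum_snoc {β M : Type*} [Fintype β] [AddCommMonoid M] {N : ℕ}
    (F : (Fin (N + 1) → β) → M) :
    ∑ q : Fin (N + 1) → β, F q = ∑ p : Fin N → β, ∑ z : β, F (Fin.snoc p z) := by
  classical
  rw [← Equiv.sum_comp (Fin.snocEquiv (fun _ => β)) F, Fintype.sum_prod_type]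
  rw [Finset.sum_comm]
  rfl

noncomputable def pterm (n : ℕ) (S : Set (V n)) (v w : V n) (t : ℕ) : ℝ :=
  ∑ q : Fin (t + 2) → V n,
    if q 0 = v ∧ (∀ i : Fin (t + 1), q i.castSucc ∈ S) ∧
        q (Fin.last (t + 1)) = w ∧ w ∉ S then
      ∏ i : Fin (t + 1), step n (q i.castSucc) (q i.succ)
    else 0

lemma exitProb_of_mem {n : ℕ} {S : Set (V n)} {v : V n} (w : V n) (h : v ∈ S) :
    exitProb n S v w = ∑' t, pterm n S v w t := by
  unfold exitProb pterm
  rw [if_pos h]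

lemma exitProb_of_not_mem {n : ℕ} {S : Set (V n)} {v : V n} (w : V n) (h : v ∉ S) :
    exitProb n S v w = if w = v then 1 else 0 := by
  unfold exitProb
  rw [if_neg h]

lemma prod_steps_nonneg {n : ℕ} {N : ℕ} (q : Fin (N + 1) → V n) :
    0 ≤ ∏ i : Fin N, step n (q i.castSucc) (q i.succ) :=
  Finset.prod_nonneg fun i _ => step_nonneg n _ _

lemma pterm_nonneg (n : ℕ) (S : Set (V n)) (v w : V n) (t : ℕ) :
    0 ≤ pterm n S v w t := by
  apply Finset.sum_nonneg
  intro q _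
  split
  · exact prod_steps_nonneg q
  · exact le_refl 0
section Paths2
open CE Finset

lemma pterm_eq (n : ℕ) (S : Set (V n)) (v w : V n) (t : ℕ) :
    pterm n S v w t =
      ∑ p : Fin (t + 1) → V n,
        if p 0 = v ∧ (∀ i : Fin (t + 1), p i ∈ S) ∧ w ∉ S then
          (∏ i : Fin t, step n (p i.castSucc) (p i.succ)) * step n (p (Fin.last t)) w
        else 0 := by
  unfold pterm
  rw [sum_snoc]
  apply Finset.sum_congr rfl
  intro p _
  have h1 : ∀ z : V n,
      (if (Fin.snoc p z : Fin (t + 2) → V n) 0 = v ∧ (∀ i : Fin (t + 1), (Fin.snoc p z : Fin (t + 2) → V n) i.castSucc ∈ S) ∧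
          (Fin.snoc p z : Fin (t + 2) → V n) (Fin.last (t + 1)) = w ∧ w ∉ S then
        ∏ i : Fin (t + 1), step n ((Fin.snoc p z : Fin (t + 2) → V n) i.castSucc) ((Fin.snoc p z : Fin (t + 2) → V n) i.succ)
      else 0)
      = if z = w then
          (if p 0 = v ∧ (∀ i : Fin (t + 1), p i ∈ S) ∧ w ∉ S then
            (∏ i : Fin t, step n (p i.castSucc) (p i.succ)) * step n (p (Fin.last t)) z
          else 0)
        else 0 := by
    intro z
    have e0 : (Fin.snoc p z : Fin (t + 2) → V n) (0 : Fin (t + 2)) = p 0 := by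
      rw [← Fin.castSucc_zero, Fin.snoc_castSucc]
    have elast : (Fin.snoc p z : Fin (t + 2) → V n) (Fin.last (t + 1)) = z := Fin.snoc_last _ _
    have eall : (∀ i : Fin (t + 1), (Fin.snoc p z : Fin (t + 2) → V n) i.castSucc ∈ S) ↔
        (∀ i : Fin (t + 1), p i ∈ S) := by
      simp only [Fin.snoc_castSucc]
    have eprod : (∏ i : Fin (t + 1), step n ((Fin.snoc p z : Fin (t + 2) → V n) i.castSucc) ((Fin.snoc p z : Fin (t + 2) → V n) i.succ))
        = (∏ i : Fin t, step n (p i.castSucc) (p i.succ)) * step n (p (Fin.last t)) z := by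
      rw [Fin.prod_univ_castSucc]
      congr 1
      · apply Finset.prod_congr rfl
        intro i _
        rw [Fin.succ_castSucc, Fin.snoc_castSucc, Fin.snoc_castSucc]
      · rw [Fin.succ_last, Fin.snoc_last, Fin.snoc_castSucc]
    rw [e0, elast, eprod]
    by_cases hz : z = w
    · subst hz
      by_cases hc : p 0 = v ∧ (∀ i : Fin (t + 1), p i ∈ S) ∧ z ∉ S
      · rw [if_pos ⟨hc.1, eall.2 hc.2.1, rfl, hc.2.2⟩, if_pos rfl, if_pos hc]
      · rw [if_neg, if_pos rfl, if_neg hc]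
        rintro ⟨a, b, _, d⟩
        exact hc ⟨a, eall.1 b, d⟩
    · rw [if_neg, if_neg hz]
      rintro ⟨_, _, c, _⟩
      exact hz c
  rw [Finset.sum_congr rfl fun z _ => h1 z, Finset.sum_ite_eq' univ w, if_pos (mem_univ w)]

noncomputable def alive (n : ℕ) (S : Set (V n)) (v : V n) (t : ℕ) : ℝ :=
  ∑ q : Fin (t + 1) → V n,
    if q 0 = v ∧ (∀ i : Fin (t + 1), q i ∈ S) then
      ∏ i : Fin t, step n (q i.castSucc) (q i.succ)
    else 0

lemma alive_nonneg (n : ℕ) (S : Set (V n)) (v : V n) (t : ℕ) : 0 ≤ alive n S v t := by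
  apply Finset.sum_nonneg
  intro q _
  split
  · exact prod_steps_nonneg q
  · exact le_refl 0

lemma alive_succ_eq (n : ℕ) (S : Set (V n)) (v : V n) (t : ℕ) :
    alive n S v (t + 1) =
      ∑ p : Fin (t + 1) → V n,
        if p 0 = v ∧ (∀ i : Fin (t + 1), p i ∈ S) then
          (∏ i : Fin t, step n (p i.castSucc) (p i.succ)) *
            (∑ z : V n, if z ∈ S then step n (p (Fin.last t)) z else 0)
        else 0 := by
  unfold alive
  rw [sum_snoc]
  apply Finset.sum_congr rfl
  intro p _
  have h1 : ∀ z : V n,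
      (if (Fin.snoc p z : Fin (t + 2) → V n) 0 = v ∧ (∀ i : Fin (t + 2), (Fin.snoc p z : Fin (t + 2) → V n) i ∈ S) then
        ∏ i : Fin (t + 1), step n ((Fin.snoc p z : Fin (t + 2) → V n) i.castSucc) ((Fin.snoc p z : Fin (t + 2) → V n) i.succ)
      else 0)
      = if p 0 = v ∧ (∀ i : Fin (t + 1), p i ∈ S) then
          (if z ∈ S then
            (∏ i : Fin t, step n (p i.castSucc) (p i.succ)) * step n (p (Fin.last t)) z
          else 0)
        else 0 := by
    intro z
    have e0 : (Fin.snoc p z : Fin (t + 2) → V n) (0 : Fin (t + 2)) = p 0 := by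
      rw [← Fin.castSucc_zero, Fin.snoc_castSucc]
    have eall : (∀ i : Fin (t + 2), (Fin.snoc p z : Fin (t + 2) → V n) i ∈ S) ↔
        ((∀ i : Fin (t + 1), p i ∈ S) ∧ z ∈ S) := by
      rw [Fin.forall_fin_succ']
      simp only [Fin.snoc_castSucc, Fin.snoc_last]
    have eprod : (∏ i : Fin (t + 1), step n ((Fin.snoc p z : Fin (t + 2) → V n) i.castSucc) ((Fin.snoc p z : Fin (t + 2) → V n) i.succ))
        = (∏ i : Fin t, step n (p i.castSucc) (p i.succ)) * step n (p (Fin.last t)) z := by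
      rw [Fin.prod_univ_castSucc]
      congr 1
      · apply Finset.prod_congr rfl
        intro i _
        rw [Fin.succ_castSucc, Fin.snoc_castSucc, Fin.snoc_castSucc]
      · rw [Fin.succ_last, Fin.snoc_last, Fin.snoc_castSucc]
    rw [e0, eprod]
    by_cases hc : p 0 = v ∧ (∀ i : Fin (t + 1), p i ∈ S)
    · by_cases hz : z ∈ S
      · rw [if_pos ⟨hc.1, eall.2 ⟨hc.2, hz⟩⟩, if_pos hc, if_pos hz]
      · rw [if_neg, if_pos hc, if_neg hz]
        rintro ⟨_, hb⟩
        exact hz (eall.1 hb).2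
    · rw [if_neg, if_neg hc]
      rintro ⟨ha, hb⟩
      exact hc ⟨ha, (eall.1 hb).1⟩
  rw [Finset.sum_congr rfl fun z _ => h1 z]
  by_cases hc : p 0 = v ∧ (∀ i : Fin (t + 1), p i ∈ S)
  · rw [if_pos hc, Finset.mul_sum]
    apply Finset.sum_congr rfl
    intro z _
    rw [if_pos hc, mul_ite, mul_zero]
  · rw [if_neg hc]
    apply Finset.sum_eq_zero
    intro z _
    rw [if_neg hc]

lemma master_ineq (n : ℕ) (S : Set (V n)) (v : V n) (t : ℕ) :
    alive n S v (t + 1) + ∑ w : V n, pterm n S v w t ≤ alive n S v t := by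
  have hterm : ∑ w : V n, pterm n S v w t =
      ∑ p : Fin (t + 1) → V n,
        if p 0 = v ∧ (∀ i : Fin (t + 1), p i ∈ S) then
          (∏ i : Fin t, step n (p i.castSucc) (p i.succ)) *
            (∑ z : V n, if z ∉ S then step n (p (Fin.last t)) z else 0)
        else 0 := by
    simp only [pterm_eq]
    rw [Finset.sum_comm]
    apply Finset.sum_congr rfl
    intro p _
    by_cases hc : p 0 = v ∧ (∀ i : Fin (t + 1), p i ∈ S)
    · rw [if_pos hc, Finset.mul_sum]
      apply Finset.sum_congr rfl
      intro z _
      by_cases hz : z ∉ S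
      · rw [if_pos ⟨hc.1, hc.2, hz⟩, if_pos hz]
      · rw [if_neg (by tauto), if_neg hz, mul_zero]
    · rw [if_neg hc]
      apply Finset.sum_eq_zero
      intro z _
      rw [if_neg (by tauto)]
  rw [hterm, alive_succ_eq, ← Finset.sum_add_distrib]
  unfold alive
  apply Finset.sum_le_sum
  intro p _
  by_cases hc : p 0 = v ∧ (∀ i : Fin (t + 1), p i ∈ S)
  · rw [if_pos hc, if_pos hc, if_pos hc, ← mul_add, ← Finset.sum_add_distrib]
    have hz : (∑ z : V n, ((if z ∈ S then step n (p (Fin.last t)) z else 0) +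
        if z ∉ S then step n (p (Fin.last t)) z else 0)) = ∑ z : V n, step n (p (Fin.last t)) z := by
      apply Finset.sum_congr rfl
      intro z _
      by_cases hz : z ∈ S <;> simp [hz]
    rw [hz]
    exact mul_le_of_le_one_right (prod_steps_nonneg p) (step_row_sum_le n _)
  · simp only [if_neg hc, add_zero, le_refl]

lemma alive_zero_le_one (n : ℕ) (S : Set (V n)) (v : V n) : alive n S v 0 ≤ 1 := by
  unfold alive
  have h1 : (∑ q : Fin 1 → V n, if q 0 = v ∧ (∀ i : Fin 1, q i ∈ S) then
      (∏ i : Fin 0, step n (q i.castSucc) (q i.succ)) else 0)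
      ≤ ∑ q : Fin 1 → V n, if q 0 = v then (1:ℝ) else 0 := by
    apply Finset.sum_le_sum
    intro q _
    by_cases hc : q 0 = v ∧ (∀ i : Fin 1, q i ∈ S)
    · rw [if_pos hc, if_pos hc.1]
      simp
    · rw [if_neg hc]
      split <;> norm_num
  refine h1.trans ?_
  rw [← Equiv.sum_comp (Equiv.funUnique (Fin 1) (V n)).symm
    (fun q => if q 0 = v then (1:ℝ) else 0)]
  have : ∀ a : V n, ((Equiv.funUnique (Fin 1) (V n)).symm a) 0 = a := fun a => rfl
  simp only [this]
  rw [Finset.sum_ite_eq' univ v (fun _ => (1:ℝ)), if_pos (mem_univ v)]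

lemma alive_partial (n : ℕ) (S : Set (V n)) (v : V n) :
    ∀ T : ℕ, alive n S v T + ∑ t ∈ Finset.range T, ∑ w : V n, pterm n S v w t ≤ 1 := by
  intro T
  induction T with
  | zero => simpa using alive_zero_le_one n S v
  | succ T ih =>
    rw [Finset.sum_range_succ]
    have := master_ineq n S v T
    linarith

lemma pterm_partial_le_one (n : ℕ) (S : Set (V n)) (v w : V n) (T : ℕ) :
    ∑ t ∈ Finset.range T, pterm n S v w t ≤ 1 := by
  have h1 : ∑ t ∈ Finset.range T, pterm n S v w t ≤
      ∑ t ∈ Finset.range T, ∑ w' : V n, pterm n S v w' t := by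
    apply Finset.sum_le_sum
    intro t _
    exact Finset.single_le_sum (fun w' _ => pterm_nonneg n S v w' t) (mem_univ w)
  have h2 := alive_partial n S v T
  have h3 := alive_nonneg n S v T
  linarith

lemma summable_pterm (n : ℕ) (S : Set (V n)) (v w : V n) :
    Summable (pterm n S v w) :=
  summable_of_sum_range_le (fun t => pterm_nonneg n S v w t)
    (fun T => pterm_partial_le_one n S v w T)

lemma exitProb_nonneg (n : ℕ) (S : Set (V n)) (v w : V n) : 0 ≤ exitProb n S v w := by
  unfold exitProb
  split
  · exact tsum_nonneg fun t => pterm_nonneg n S v w t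
  · split <;> norm_num

lemma pterm_le_exitProb {n : ℕ} {S : Set (V n)} {v w : V n} (h : v ∈ S) (t : ℕ) :
    pterm n S v w t ≤ exitProb n S v w := by
  rw [exitProb_of_mem w h]
  exact Summable.le_tsum (summable_pterm n S v w) t fun j _ => pterm_nonneg n S v w j

end Paths2
section Graph
open CE Finset

lemma edgeCount_symm (n : ℕ) (u z : V n) : edgeCount n u z = edgeCount n z u := by
  unfold edgeCount
  have hv : (if u.1 = z.1 then
        (if u.2.1 + 1 = z.2.1 then 1 else 0) + (if z.2.1 + 1 = u.2.1 then 1 else 0) else 0)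
      = (if z.1 = u.1 then
        (if z.2.1 + 1 = u.2.1 then 1 else 0) + (if u.2.1 + 1 = z.2.1 then 1 else 0) else 0) := by
    by_cases h : u.1 = z.1
    · rw [if_pos h, if_pos h.symm, add_comm]
    · rw [if_neg h, if_neg fun hh => h hh.symm]
  have hh : (if u.2 = z.2 then
        (if (u.1.1 + 1) % n = z.1.1 then 1 else 0) + (if (z.1.1 + 1) % n = u.1.1 then 1 else 0) else 0)
      = (if z.2 = u.2 then
        (if (z.1.1 + 1) % n = u.1.1 then 1 else 0) + (if (u.1.1 + 1) % n = z.1.1 then 1 else 0) else 0) := by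
    by_cases h : u.2 = z.2
    · rw [if_pos h, if_pos h.symm, add_comm]
    · rw [if_neg h, if_neg fun hh => h hh.symm]
  have hs : (if u = z ∧ (u.2.1 = 0 ∨ u.2.1 = n) then 1 else 0)
      = (if z = u ∧ (z.2.1 = 0 ∨ z.2.1 = n) then (1:ℕ) else 0) := by
    by_cases h : u = z
    · subst h; rfl
    · rw [if_neg (fun hh => h hh.1), if_neg (fun hh => h hh.1.symm)]
  rw [hv, hh, hs]

lemma Adj_symm {n : ℕ} {u z : V n} (h : Adj n u z) : Adj n z u :=
  ⟨h.1.symm, by rw [edgeCount_symm]; exact h.2⟩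

lemma reachIn_mem_right {n : ℕ} {T : Set (V n)} {u v : V n} (h : ReachIn n T u v) :
    v ∈ T := by
  obtain ⟨hu, hr⟩ := h
  induction hr with
  | refl => exact hu
  | tail _ hstep _ => exact hstep.2

lemma reachIn_symm {n : ℕ} {T : Set (V n)} {u v : V n} (h : ReachIn n T u v) :
    ReachIn n T v u := by
  refine ⟨reachIn_mem_right h, ?_⟩
  obtain ⟨hu, hr⟩ := h
  induction hr with
  | refl => exact Relation.ReflTransGen.refl
  | tail hab hstep ih =>
    exact Relation.ReflTransGen.head
      ⟨Adj_symm hstep.1, reachIn_mem_right ⟨hu, hab⟩⟩ ih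

lemma reachIn_trans {n : ℕ} {T : Set (V n)} {u v w : V n}
    (h1 : ReachIn n T u v) (h2 : ReachIn n T v w) : ReachIn n T u w :=
  ⟨h1.1, h1.2.trans h2.2⟩

lemma edgeCount_vert_up {n : ℕ} (x : Fin n) (j1 j2 : Fin (n + 1)) (h : j1.1 + 1 = j2.1) :
    0 < edgeCount n (x, j1) (x, j2) := by
  rw [edgeCount_eq]
  have h1 : (if (x, j1).1 = (x, j2).1 ∧ (x, j1).2.1 + 1 = (x, j2).2.1 then 1 else 0) = 1 :=
    if_pos ⟨rfl, h⟩
  omega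

lemma edgeCount_vert_down {n : ℕ} (x : Fin n) (j1 j2 : Fin (n + 1)) (h : j2.1 + 1 = j1.1) :
    0 < edgeCount n (x, j1) (x, j2) := by
  rw [edgeCount_eq]
  have h1 : (if (x, j1).1 = (x, j2).1 ∧ (x, j2).2.1 + 1 = (x, j1).2.1 then 1 else 0) = 1 :=
    if_pos ⟨rfl, h⟩
  omega

lemma adj_vert_up {n : ℕ} (x : Fin n) (j1 j2 : Fin (n + 1)) (h : j1.1 + 1 = j2.1) :
    Adj n (x, j1) (x, j2) := by
  refine ⟨?_, edgeCount_vert_up x j1 j2 h⟩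
  intro heq
  have : j1 = j2 := congrArg Prod.snd heq
  rw [this] at h
  omega

/-- climbing a column upward inside `T`. -/
lemma col_rtg {n : ℕ} (T : Set (V n)) (x : Fin n) :
    ∀ (d a : ℕ) (h : a + d ≤ n),
      (∀ (j : ℕ) (_ : a ≤ j) (_ : j ≤ a + d), ((x, ⟨j, by omega⟩) : V n) ∈ T) →
      Relation.ReflTransGen (fun p q : V n => Adj n p q ∧ q ∈ T)
        (x, ⟨a, by omega⟩) (x, ⟨a + d, by omega⟩) := by
  intro d
  induction d with
  | zero => intro a h _; exact Relation.ReflTransGen.refl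
  | succ d ih =>
    intro a h hmem
    have h' : a + d ≤ n := by omega
    have base := ih a h' (fun j hj1 hj2 => hmem j hj1 (by omega))
    refine base.tail ⟨?_, ?_⟩
    · exact adj_vert_up x ⟨a + d, by omega⟩ ⟨a + d + 1, by omega⟩ rfl
    · exact hmem (a + d + 1) (by omega) (by omega)

end Graph
section ExitLemmas
open CE Finset

lemma step_pos_iff {n : ℕ} {u z : V n} : 0 < step n u z ↔ 0 < edgeCount n u z := by
  unfold step
  constructor
  · intro h
    by_contra hc
    push_neg at hc
    interval_cases h' : edgeCount n u z
    · simp [h'] at h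
  · intro h
    have : (0:ℝ) < (edgeCount n u z : ℝ) := by exact_mod_cast h
    positivity

lemma walk_reachIn {n : ℕ} {T S : Set (V n)} {t : ℕ} (q : Fin (t + 2) → V n)
    (hmem : ∀ i : Fin (t + 1), q i.castSucc ∈ S)
    (hsteps : ∀ i : Fin (t + 1), 0 < edgeCount n (q i.castSucc) (q i.succ))
    (hsub : S ⊆ T) (hlastT : q (Fin.last (t + 1)) ∈ T) :
    ReachIn n T (q 0) (q (Fin.last (t + 1))) := by
  have hmemT : ∀ (k : ℕ) (_ : k ≤ t + 1), q ⟨k, by omega⟩ ∈ T := by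
    intro k hk
    rcases Nat.lt_or_ge k (t + 1) with h | h
    · exact hsub (hmem ⟨k, h⟩)
    · have : k = t + 1 := by omega
      subst this
      exact hlastT
  have key : ∀ k : ℕ, (hk : k ≤ t + 1) →
      Relation.ReflTransGen (fun a b : V n => Adj n a b ∧ b ∈ T) (q 0) (q ⟨k, by omega⟩) := by
    intro k
    induction k with
    | zero =>
      intro _
      have : (⟨0, by omega⟩ : Fin (t + 2)) = 0 := rfl
      rw [this]
    | succ k ih =>
      intro hk
      have hk' : k ≤ t + 1 := by omega
      have base := ih hk'
      have i : Fin (t + 1) := ⟨k, by omega⟩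
      by_cases heq : q ⟨k, by omega⟩ = q ⟨k + 1, by omega⟩
      · rw [← heq]; exact base
      · refine base.tail ⟨⟨?_, ?_⟩, ?_⟩
        · exact heq
        · exact hsteps ⟨k, by omega⟩
        · exact hmemT (k + 1) (by omega)
  have hl : (Fin.last (t + 1)) = (⟨t + 1, by omega⟩ : Fin (t + 2)) := rfl
  refine ⟨hsub (by have h0 : (0 : Fin (t+2)) = (0 : Fin (t+1)).castSucc := rfl
                   rw [h0]; exact hmem 0), ?_⟩
  rw [hl]
  exact key (t + 1) (le_refl _)

lemma exit_walk {n : ℕ} {S : Set (V n)} {v w : V n} (hv : v ∈ S)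
    (h : 0 < exitProb n S v w) :
    w ∉ S ∧ ∃ (t : ℕ) (q : Fin (t + 2) → V n), q 0 = v ∧
      (∀ i : Fin (t + 1), q i.castSucc ∈ S) ∧ q (Fin.last (t + 1)) = w ∧
      (∀ i : Fin (t + 1), 0 < edgeCount n (q i.castSucc) (q i.succ)) := by
  rw [exitProb_of_mem w hv] at h
  have hex : ∃ t, pterm n S v w t ≠ 0 := by
    by_contra hc
    push_neg at hc
    rw [tsum_congr hc, tsum_zero] at h
    exact lt_irrefl 0 h
  obtain ⟨t, ht⟩ := hex
  have hq : ∃ q : Fin (t + 2) → V n,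
      (q 0 = v ∧ (∀ i : Fin (t + 1), q i.castSucc ∈ S) ∧
        q (Fin.last (t + 1)) = w ∧ w ∉ S) ∧
      (∏ i : Fin (t + 1), step n (q i.castSucc) (q i.succ)) ≠ 0 := by
    by_contra hc
    push_neg at hc
    apply ht
    unfold pterm
    apply Finset.sum_eq_zero
    intro q _
    split
    · next hcond => exact hc q hcond
    · rfl
  obtain ⟨q, ⟨h0, hmem, hlast, hw⟩, hprod⟩ := hq
  refine ⟨hw, t, q, h0, hmem, hlast, ?_⟩
  intro i
  rw [step_pos_iff.symm]
  rcases lt_or_eq_of_le (step_nonneg n (q i.castSucc) (q i.succ)) with h' | h'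
  · exact h'
  · exfalso
    apply hprod
    apply Finset.prod_eq_zero (mem_univ i)
    exact h'.symm

lemma exit_reach {n : ℕ} {S T : Set (V n)} {v w : V n}
    (h : 0 < exitProb n S v w) (hsub : S ⊆ T) (hw : w ∈ T) : ReachIn n T v w := by
  by_cases hv : v ∈ S
  · obtain ⟨hns, t, q, h0, hmem, hlast, hsteps⟩ := exit_walk hv h
    have := walk_reachIn q hmem hsteps hsub (by rw [hlast]; exact hw)
    rw [h0, hlast] at this
    exact this
  · rw [exitProb_of_not_mem w hv] at h
    have hwv : w = v := by
      by_contra hc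
      rw [if_neg hc] at h
      exact lt_irrefl 0 h
    subst hwv
    exact ⟨hw, Relation.ReflTransGen.refl⟩

lemma exit_not_mem {n : ℕ} {S : Set (V n)} {v w : V n}
    (h : 0 < exitProb n S v w) : w ∉ S := by
  by_cases hv : v ∈ S
  · exact (exit_walk hv h).1
  · rw [exitProb_of_not_mem w hv] at h
    have hwv : w = v := by
      by_contra hc
      rw [if_neg hc] at h
      exact lt_irrefl 0 h
    subst hwv
    exact hv

lemma exitProb_pos_of_walk {n : ℕ} {S : Set (V n)} {v w : V n} (hv : v ∈ S)
    (t : ℕ) (q : Fin (t + 2) → V n) (h0 : q 0 = v)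
    (hmem : ∀ i : Fin (t + 1), q i.castSucc ∈ S)
    (hlast : q (Fin.last (t + 1)) = w) (hw : w ∉ S)
    (hsteps : ∀ i : Fin (t + 1), 0 < edgeCount n (q i.castSucc) (q i.succ)) :
    0 < exitProb n S v w := by
  have hterm : 0 < pterm n S v w t := by
    unfold pterm
    have hqv : (if q 0 = v ∧ (∀ i : Fin (t + 1), q i.castSucc ∈ S) ∧
        q (Fin.last (t + 1)) = w ∧ w ∉ S then
        ∏ i : Fin (t + 1), step n (q i.castSucc) (q i.succ) else 0)
        = ∏ i : Fin (t + 1), step n (q i.castSucc) (q i.succ) :=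
      if_pos ⟨h0, hmem, hlast, hw⟩
    have hp : 0 < ∏ i : Fin (t + 1), step n (q i.castSucc) (q i.succ) :=
      Finset.prod_pos fun i _ => step_pos_iff.2 (hsteps i)
    calc (0:ℝ) < ∏ i : Fin (t + 1), step n (q i.castSucc) (q i.succ) := hp
      _ = _ := hqv.symm
      _ ≤ _ := Finset.single_le_sum (f := fun q : Fin (t+2) → V n =>
          if q 0 = v ∧ (∀ i : Fin (t + 1), q i.castSucc ∈ S) ∧
              q (Fin.last (t + 1)) = w ∧ w ∉ S then
            ∏ i : Fin (t + 1), step n (q i.castSucc) (q i.succ) else 0)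
          (fun p _ => by
            split
            · exact prod_steps_nonneg p
            · exact le_refl 0)
          (mem_univ q)
  exact lt_of_lt_of_le hterm (pterm_le_exitProb hv t)

lemma exitProb_pos_up {n : ℕ} {S : Set (V n)} (x : Fin n) (j : Fin (n + 1))
    (hj : 0 < j.1)
    (hmem : ∀ j' : Fin (n + 1), j'.1 < j.1 → ((x, j') : V n) ∈ S)
    (hw : ((x, j) : V n) ∉ S) :
    0 < exitProb n S (x, (0 : Fin (n + 1))) (x, j) := by
  have hjn := j.2
  set t := j.1 - 1 with ht
  have hq : ∀ i : Fin (t + 2), i.1 ≤ n := fun i => by have := i.2; omega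
  refine exitProb_pos_of_walk (hmem 0 hj) t
    (fun i => (x, ⟨i.1, by have := i.2; omega⟩)) ?_ ?_ ?_ hw ?_
  · rfl
  · intro i
    apply hmem
    have := i.2
    simp only [Fin.coe_castSucc]
    omega
  · exact congrArg (fun y => ((x, y) : V n)) (Fin.ext (by simp only [Fin.val_last, Fin.val_zero]; omega))
  · intro i
    apply edgeCount_vert_up
    simp [Fin.coe_castSucc, Fin.val_succ]

lemma exitProb_pos_down {n : ℕ} {S : Set (V n)} (x : Fin n) (j : Fin (n + 1))
    (hj : j.1 < n)
    (hmem : ∀ j' : Fin (n + 1), j.1 < j'.1 → ((x, j') : V n) ∈ S)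
    (hw : ((x, j) : V n) ∉ S) :
    0 < exitProb n S (x, Fin.last n) (x, j) := by
  set t := n - j.1 - 1 with ht
  refine exitProb_pos_of_walk (hmem (Fin.last n) (by simp [Fin.last]; omega)) t
    (fun i => (x, ⟨n - i.1, by omega⟩)) ?_ ?_ ?_ hw ?_
  · exact congrArg (fun y => ((x, y) : V n)) (Fin.ext (by simp only [Fin.val_last, Fin.val_zero]; omega))
  · intro i
    apply hmem
    have := i.2
    simp only [Fin.coe_castSucc]
    omega
  · exact congrArg (fun y => ((x, y) : V n)) (Fin.ext (by simp only [Fin.val_last, Fin.val_zero]; omega))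
  · intro i
    apply edgeCount_vert_down
    have := i.2
    simp only [Fin.coe_castSucc, Fin.val_succ]
    omega

end ExitLemmas
section Chain
open CE Finset

lemma mul_pos_elim {a b : ℝ} (ha : 0 ≤ a) (hb : 0 ≤ b) (h : 0 < a * b) :
    0 < a ∧ 0 < b := by
  constructor
  · rcases lt_or_eq_of_le ha with h' | h'
    · exact h'
    · exfalso; rw [← h', zero_mul] at h; exact lt_irrefl 0 h
  · rcases lt_or_eq_of_le hb with h' | h'
    · exact h'
    · exfalso; rw [← h', mul_zero] at h; exact lt_irrefl 0 h

lemma blueHalf_nonneg (n : ℕ) (σ : Config n) (w : V n) : 0 ≤ blueHalf n σ w := by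
  unfold blueHalf
  apply mul_nonneg (by positivity)
  exact Finset.sum_nonneg fun x _ => exitProb_nonneg n _ _ _

lemma redHalf_nonneg (n : ℕ) (σ : Config n) (w : V n) : 0 ≤ redHalf n σ w := by
  unfold redHalf
  apply mul_nonneg (by positivity)
  exact Finset.sum_nonneg fun x _ => exitProb_nonneg n _ _ _

lemma K_nonneg (n : ℕ) (σ σ' : Config n) : 0 ≤ K n σ σ' := by
  unfold K
  apply Finset.sum_nonneg
  intro w _
  apply Finset.sum_nonneg
  intro w' _
  split
  · exact mul_nonneg (blueHalf_nonneg n σ w) (redHalf_nonneg n _ w')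
  · exact le_refl 0

lemma Kpow_nonneg (n : ℕ) (t : ℕ) (σ σ' : Config n) : 0 ≤ Kpow n t σ σ' := by
  induction t generalizing σ' with
  | zero =>
    unfold Kpow; split <;> norm_num
  | succ t ih =>
    unfold Kpow
    apply Finset.sum_nonneg
    intro τ _
    exact mul_nonneg (ih τ) (K_nonneg n τ σ')

lemma accessible_refl (n : ℕ) (σ : Config n) : Accessible n σ σ := by
  refine ⟨0, ?_⟩
  unfold Kpow
  rw [if_pos rfl]
  norm_num

lemma accessible_step {n : ℕ} {σ τ σ' : Config n} (h1 : Accessible n σ τ)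
    (h2 : 0 < K n τ σ') : Accessible n σ σ' := by
  obtain ⟨s, hs⟩ := h1
  refine ⟨s + 1, ?_⟩
  show 0 < ∑ ρ : Config n, Kpow n s σ ρ * K n ρ σ'
  have hterm : 0 < Kpow n s σ τ * K n τ σ' := mul_pos hs h2
  refine lt_of_lt_of_le hterm ?_
  exact Finset.single_le_sum
    (fun ρ _ => mul_nonneg (Kpow_nonneg n s σ ρ) (K_nonneg n ρ σ')) (mem_univ τ)

lemma kpow_zero_elim {n : ℕ} {σ σ' : Config n} (h : 0 < Kpow n 0 σ σ') : σ = σ' := by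
  by_contra hc
  unfold Kpow at h
  rw [if_neg hc] at h
  exact lt_irrefl 0 h

lemma kpow_succ_elim {n : ℕ} {t : ℕ} {σ σ' : Config n} (h : 0 < Kpow n (t + 1) σ σ') :
    ∃ ρ : Config n, 0 < Kpow n t σ ρ ∧ 0 < K n ρ σ' := by
  unfold Kpow at h
  obtain ⟨ρ, _, hρ⟩ := sum_pos_exists h
  exact ⟨ρ, mul_pos_elim (Kpow_nonneg n t σ ρ) (K_nonneg n ρ σ') hρ⟩

lemma accessible_trans {n : ℕ} {σ τ σ' : Config n} (h1 : Accessible n σ τ)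
    (h2 : Accessible n τ σ') : Accessible n σ σ' := by
  obtain ⟨t, ht⟩ := h2
  induction t generalizing σ' with
  | zero => rw [← kpow_zero_elim ht]; exact h1
  | succ t ih =>
    obtain ⟨ρ, hρ1, hρ2⟩ := kpow_succ_elim ht
    exact accessible_step (ih hρ1) hρ2

lemma K_pos_elim {n : ℕ} {τ σ' : Config n} (h : 0 < K n τ σ') :
    ∃ w w' : V n, σ' = recolor n (recolor n τ w true) w' false ∧
      0 < blueHalf n τ w ∧ 0 < redHalf n (recolor n τ w true) w' := by
  unfold K at h
  obtain ⟨w, _, hw⟩ := sum_pos_exists h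
  obtain ⟨w', _, hw'⟩ := sum_pos_exists hw
  refine ⟨w, w', ?_, ?_⟩
  · by_contra hc
    rw [if_neg hc] at hw'
    exact lt_irrefl 0 hw'
  · have hcond : σ' = recolor n (recolor n τ w true) w' false := by
      by_contra hc
      rw [if_neg hc] at hw'
      exact lt_irrefl 0 hw'
    rw [if_pos hcond] at hw'
    exact mul_pos_elim (blueHalf_nonneg n τ w) (redHalf_nonneg n _ w') hw'

lemma blueHalf_pos_elim {n : ℕ} {σ : Config n} {w : V n} (h : 0 < blueHalf n σ w) :
    ∃ x : Fin n, 0 < exitProb n {v | σ v = true} (bottom n x) w := by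
  unfold blueHalf at h
  have := mul_pos_elim (by positivity)
    (Finset.sum_nonneg fun x _ => exitProb_nonneg n _ _ _) h
  obtain ⟨x, _, hx⟩ := sum_pos_exists this.2
  exact ⟨x, hx⟩

lemma redHalf_pos_elim {n : ℕ} {σ : Config n} {w : V n} (h : 0 < redHalf n σ w) :
    ∃ x : Fin n, 0 < exitProb n {v | σ v = false} (top n x) w := by
  unfold redHalf at h
  have := mul_pos_elim (by positivity)
    (Finset.sum_nonneg fun x _ => exitProb_nonneg n _ _ _) h
  obtain ⟨x, _, hx⟩ := sum_pos_exists this.2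
  exact ⟨x, hx⟩

lemma blueHalf_pos_intro {n : ℕ} (hn : 0 < n) {σ : Config n} {w : V n} (x : Fin n)
    (h : 0 < exitProb n {v | σ v = true} (bottom n x) w) : 0 < blueHalf n σ w := by
  unfold blueHalf
  apply mul_pos
  · have : (0:ℝ) < n := by exact_mod_cast hn
    positivity
  · exact lt_of_lt_of_le h (Finset.single_le_sum
      (fun y _ => exitProb_nonneg n _ _ _) (mem_univ x))

lemma redHalf_pos_intro {n : ℕ} (hn : 0 < n) {σ : Config n} {w : V n} (x : Fin n)
    (h : 0 < exitProb n {v | σ v = false} (top n x) w) : 0 < redHalf n σ w := by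
  unfold redHalf
  apply mul_pos
  · have : (0:ℝ) < n := by exact_mod_cast hn
    positivity
  · exact lt_of_lt_of_le h (Finset.single_le_sum
      (fun y _ => exitProb_nonneg n _ _ _) (mem_univ x))

set_option maxHeartbeats 1000000 in
lemma K_pos_intro {n : ℕ} {σ : Config n} (w w' : V n)
    (hb : 0 < blueHalf n σ w) (hr : 0 < redHalf n (recolor n σ w true) w') :
    0 < K n σ (recolor n (recolor n σ w true) w' false) := by
  unfold K
  have hterm : 0 < (if recolor n (recolor n σ w true) w' false =
      recolor n (recolor n σ w true) w' false then
      blueHalf n σ w * redHalf n (recolor n σ w true) w' else 0) := by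
    rw [if_pos rfl]
    exact mul_pos hb hr
  have hinner : (if recolor n (recolor n σ w true) w' false =
      recolor n (recolor n σ w true) w' false then
      blueHalf n σ w * redHalf n (recolor n σ w true) w' else 0) ≤
      ∑ y' : V n, if recolor n (recolor n σ w true) w' false =
        recolor n (recolor n σ w true) y' false then
        blueHalf n σ w * redHalf n (recolor n σ w true) y' else 0 := by
    exact Finset.single_le_sum (f := fun y' : V n =>
        if recolor n (recolor n σ w true) w' false =
          recolor n (recolor n σ w true) y' false then
          blueHalf n σ w * redHalf n (recolor n σ w true) y' else 0)
      (fun y' _ => by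
        split
        · exact mul_nonneg (blueHalf_nonneg n σ w) (redHalf_nonneg n _ y')
        · exact le_refl 0)
      (mem_univ w')
  refine lt_of_lt_of_le (lt_of_lt_of_le hterm hinner) ?_
  exact Finset.single_le_sum (f := fun y : V n =>
      ∑ y' : V n, if recolor n (recolor n σ w true) w' false =
        recolor n (recolor n σ y true) y' false then
        blueHalf n σ y * redHalf n (recolor n σ y true) y' else 0)
    (fun y _ => Finset.sum_nonneg fun y' _ => by
      split
      · exact mul_nonneg (blueHalf_nonneg n σ y) (redHalf_nonneg n _ y')
      · exact le_refl 0)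
    (mem_univ w)

end Chain
section Rank
open CE Finset

def rank {n : ℕ} (v : V n) : ℕ := v.2.1 * n + v.1.1

noncomputable def sigma0 (n m : ℕ) : Config n := fun v => decide (rank v < m)

lemma rank_inj {n : ℕ} {u v : V n} (h : rank u = rank v) : u = v := by
  rcases Nat.eq_zero_or_pos n with hn | hn
  · exact absurd u.1.2 (by omega)
  unfold rank at h
  have h1 : u.1.1 = v.1.1 := by
    have e1 : (n * u.2.1 + u.1.1) % n = (n * v.2.1 + v.1.1) % n := by
      rw [mul_comm n u.2.1, mul_comm n v.2.1]; rw [h]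
    rw [Nat.mul_add_mod, Nat.mul_add_mod, Nat.mod_eq_of_lt u.1.2, Nat.mod_eq_of_lt v.1.2] at e1
    exact e1
  have h2 : u.2.1 = v.2.1 := by
    have : u.2.1 * n = v.2.1 * n := by omega
    exact Nat.eq_of_mul_eq_mul_right hn this
  exact Prod.ext (Fin.ext h1) (Fin.ext h2)

lemma rank_lt {n : ℕ} (v : V n) : rank v < n * (n + 1) := by
  have h1 : v.2.1 * n ≤ n * n := Nat.mul_le_mul_right n (by have := v.2.2; omega)
  have h2 : v.1.1 < n := v.1.2
  have h3 : n * (n + 1) = n * n + n := by ring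
  unfold rank
  omega

lemma card_rank_lt (n : ℕ) (k : ℕ) (hk : k ≤ n * (n + 1)) :
    (Finset.univ.filter fun v : V n => rank v < k).card = k := by
  rcases Nat.eq_zero_or_pos n with hn | hn
  · subst hn
    have hk0 : k = 0 := by omega
    subst hk0
    simp
  have hbij : (Finset.univ.filter fun v : V n => rank v < k).card
      = (Finset.univ : Finset (Fin k)).card := by
    refine Finset.card_bij'
      (fun v hv => (⟨rank v, by simp only [mem_filter, mem_univ, true_and] at hv; exact hv⟩ : Fin k))
      (fun a _ => ((⟨a.1 % n, Nat.mod_lt _ hn⟩, ⟨a.1 / n, by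
        rw [Nat.div_lt_iff_lt_mul hn]
        calc a.1 < k := a.2
          _ ≤ n * (n + 1) := hk
          _ = (n + 1) * n := by ring⟩) : V n)) ?_ ?_ ?_ ?_
    · intro a _; exact mem_univ _
    · intro a _
      simp only [mem_filter, mem_univ, true_and]
      show (a.1 / n) * n + a.1 % n < k
      have : (a.1 / n) * n + a.1 % n = a.1 := by
        rw [mul_comm]; exact Nat.div_add_mod a.1 n
      rw [this]; exact a.2
    · intro v hv
      have hmod : rank v % n = v.1.1 := by
        unfold rank
        rw [mul_comm, Nat.mul_add_mod, Nat.mod_eq_of_lt v.1.2]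
      have hdiv : rank v / n = v.2.1 := by
        unfold rank
        rw [Nat.add_comm, Nat.add_mul_div_right _ _ hn, Nat.div_eq_of_lt v.1.2]
        omega
      exact Prod.ext (Fin.ext hmod) (Fin.ext hdiv)
    · intro a _
      apply Fin.ext
      show (a.1 / n) * n + a.1 % n = a.1
      rw [mul_comm]; exact Nat.div_add_mod a.1 n
  rw [hbij]
  simp

lemma blueCount_eq_sum (n : ℕ) (σ : Config n) :
    blueCount n σ = ∑ v : V n, if σ v = true then 1 else 0 := by
  unfold blueCount
  exact Finset.card_filter _ _

lemma blueCount_sigma0 (n : ℕ) (m : ℕ) (hm : m ≤ n * (n + 1)) :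
    blueCount n (sigma0 n m) = m := by
  unfold blueCount
  have : (Finset.univ.filter fun v : V n => sigma0 n m v = true) =
      (Finset.univ.filter fun v : V n => rank v < m) := by
    apply Finset.filter_congr
    intro v _
    unfold sigma0
    simp
  rw [this, card_rank_lt n m hm]

lemma blueCount_le (n : ℕ) (σ : Config n) : blueCount n σ ≤ n * (n + 1) := by
  unfold blueCount
  calc (Finset.univ.filter fun v : V n => σ v = true).card
      ≤ (Finset.univ : Finset (V n)).card := Finset.card_filter_le _ _
    _ = n * (n + 1) := by simp [Fintype.card_prod]

def Phi (n : ℕ) (σ : Config n) : ℕ := ∑ v : V n, if σ v = true then rank v else 0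

lemma sum_recolor {n : ℕ} (F : V n → Bool → ℕ) (σ : Config n) (w : V n) (c : Bool) :
    (∑ v : V n, F v (recolor n σ w c v)) + F w (σ w) =
      (∑ v : V n, F v (σ v)) + F w c := by
  rw [Finset.sum_eq_sum_sdiff_singleton_add (mem_univ w) (fun v => F v (recolor n σ w c v)),
    Finset.sum_eq_sum_sdiff_singleton_add (mem_univ w) (fun v => F v (σ v))]
  have h1 : ∑ v ∈ Finset.univ \ {w}, F v (recolor n σ w c v) =
      ∑ v ∈ Finset.univ \ {w}, F v (σ v) := by
    apply Finset.sum_congr rfl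
    intro v hv
    simp only [Finset.mem_sdiff, Finset.mem_singleton] at hv
    unfold recolor
    rw [if_neg hv.2]
  have h2 : recolor n σ w c w = c := by unfold recolor; rw [if_pos rfl]
  rw [h1, h2]
  omega

lemma blueCount_recolor_true {n : ℕ} {σ : Config n} {w : V n} (h : σ w = false) :
    blueCount n (recolor n σ w true) = blueCount n σ + 1 := by
  have := sum_recolor (fun _ b => if b = true then 1 else 0) σ w true
  rw [← blueCount_eq_sum, ← blueCount_eq_sum] at this
  simp only [h] at this
  simpa using this

lemma blueCount_recolor_false {n : ℕ} {σ : Config n} {w : V n} (h : σ w = true) :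
    blueCount n (recolor n σ w false) + 1 = blueCount n σ := by
  have := sum_recolor (fun _ b => if b = true then 1 else 0) σ w false
  rw [← blueCount_eq_sum, ← blueCount_eq_sum] at this
  simp only [h] at this
  simpa using this

lemma Phi_recolor_true {n : ℕ} {σ : Config n} {w : V n} (h : σ w = false) :
    Phi n (recolor n σ w true) = Phi n σ + rank w := by
  have := sum_recolor (fun v b => if b = true then rank v else 0) σ w true
  unfold Phi
  simp only [h] at this
  simpa using this

lemma Phi_recolor_false {n : ℕ} {σ : Config n} {w : V n} (h : σ w = true) :
    Phi n (recolor n σ w false) + rank w = Phi n σ := by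
  have := sum_recolor (fun v b => if b = true then rank v else 0) σ w false
  unfold Phi
  simp only [h] at this
  simpa using this

lemma recolor_ne {n : ℕ} (σ : Config n) (w v : V n) (c : Bool) (h : v ≠ w) :
    recolor n σ w c v = σ v := by
  unfold recolor; rw [if_neg h]

lemma recolor_self {n : ℕ} (σ : Config n) (w : V n) (c : Bool) :
    recolor n σ w c w = c := by
  unfold recolor; rw [if_pos rfl]

end Rank
section Move
open CE Finset

lemma rank_row_lt {n : ℕ} (x : Fin n) {j j' : Fin (n + 1)} (h : j'.1 < j.1) :
    rank ((x, j') : V n) < rank ((x, j) : V n) := by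
  have h2 : (j'.1 + 1) * n ≤ j.1 * n := Nat.mul_le_mul_right n (by omega)
  rw [add_mul, one_mul] at h2
  have := x.2
  unfold rank
  simp only
  omega

lemma move_exists {n : ℕ} (hn : 2 ≤ n) (σ : Config n)
    (hne : σ ≠ sigma0 n (blueCount n σ)) :
    ∃ σ' : Config n, 0 < K n σ σ' ∧ blueCount n σ' = blueCount n σ ∧
      Phi n σ' < Phi n σ := by
  have hn0 : 0 < n := by omega
  have hredne : (Finset.univ.filter fun v : V n => σ v = false).Nonempty := by
    by_contra hc
    rw [Finset.not_nonempty_iff_eq_empty, Finset.filter_eq_empty_iff] at hc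
    apply hne
    have hall : ∀ v : V n, σ v = true := by
      intro v
      cases hσ : σ v
      · exact absurd hσ (hc (Finset.mem_univ v))
      · rfl
    have hbc : blueCount n σ = n * (n + 1) := by
      unfold blueCount
      rw [Finset.filter_true_of_mem fun v _ => hall v]
      simp [Fintype.card_prod]
    funext v
    rw [hall v, hbc]
    unfold sigma0
    exact (decide_eq_true (rank_lt v)).symm
  obtain ⟨r, hrmem, hrmin⟩ := Finset.exists_min_image _ rank hredne
  simp only [Finset.mem_filter, Finset.mem_univ, true_and] at hrmem
  have hrmin' : ∀ u : V n, σ u = false → rank r ≤ rank u := fun u hu =>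
    hrmin u (by simp [hu])
  have hblue : ∀ u : V n, rank u < rank r → σ u = true := by
    intro u hu
    cases hσ : σ u
    · exact absurd (hrmin' u hσ) (by omega)
    · rfl
  set σp := recolor n σ r true with hσp
  have hσpr : σp r = true := recolor_self σ r true
  have hbluene : (Finset.univ.filter fun v : V n => σp v = true).Nonempty :=
    ⟨r, by simp [hσpr]⟩
  obtain ⟨b, hbmem, hbmax⟩ := Finset.exists_max_image _ rank hbluene
  simp only [Finset.mem_filter, Finset.mem_univ, true_and] at hbmem
  have hbmax' : ∀ u : V n, σp u = true → rank u ≤ rank b := fun u hu =>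
    hbmax u (by simp [hu])
  have hbr : b ≠ r := by
    intro hbr'
    apply hne
    have hkey : ∀ v : V n, σ v = true ↔ rank v < rank r := by
      intro v
      constructor
      · intro hv
        have hvr : v ≠ r := by
          intro h'; rw [h', hrmem] at hv; exact Bool.noConfusion hv
        have hvp : σp v = true := by
          rw [hσp, recolor_ne σ r v true hvr]; exact hv
        have h1 : rank v ≤ rank r := by
          have := hbmax' v hvp; rw [hbr'] at this; exact this
        rcases lt_or_eq_of_le h1 with h2 | h2
        · exact h2
        · exact absurd (rank_inj h2) hvr
      · exact hblue v
    have hbcount : blueCount n σ = rank r := by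
      unfold blueCount
      have : (Finset.univ.filter fun v : V n => σ v = true) =
          Finset.univ.filter fun v : V n => rank v < rank r :=
        Finset.filter_congr fun v _ => by
          constructor
          · exact (hkey v).1
          · exact (hkey v).2
      rw [this, card_rank_lt n (rank r) (le_of_lt (rank_lt r))]
    funext v
    rw [hbcount]
    by_cases hv : rank v < rank r
    · rw [(hkey v).2 hv]
      exact (decide_eq_true hv).symm
    · cases hσv : σ v
      · exact ((decide_eq_false hv).symm : _)
      · exact absurd ((hkey v).1 hσv) hv
  have hσb : σ b = true := by
    rw [← recolor_ne σ r b true hbr]; exact hbmem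
  have hrb : rank r < rank b := by
    have h1 : rank r ≤ rank b := hbmax' r hσpr
    rcases lt_or_eq_of_le h1 with h2 | h2
    · exact h2
    · exact absurd (rank_inj h2).symm hbr
  -- blue walker can convert r
  have hbh : 0 < blueHalf n σ r := by
    apply blueHalf_pos_intro hn0 r.1
    rcases Nat.eq_zero_or_pos r.2.1 with h0 | h0
    · have hbot : bottom n r.1 = r := by
        refine Prod.ext rfl ?_
        show (0 : Fin (n + 1)) = r.2
        exact Fin.ext (by simp [h0])
      rw [hbot, exitProb_of_not_mem r (by simp [Set.mem_setOf_eq, hrmem]), if_pos rfl]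
      norm_num
    · have hpos := exitProb_pos_up (S := {v : V n | σ v = true}) r.1 r.2 h0
        (fun j' hj' => by
          show σ (r.1, j') = true
          apply hblue
          have : rank ((r.1, j') : V n) < rank ((r.1, r.2) : V n) := rank_row_lt r.1 hj'
          rwa [Prod.mk.eta] at this)
        (by rw [Prod.mk.eta]; simp [Set.mem_setOf_eq, hrmem])
      rw [Prod.mk.eta] at hpos
      exact hpos
  -- red walker can convert b
  have hrh : 0 < redHalf n σp b := by
    apply redHalf_pos_intro hn0 b.1
    rcases Nat.lt_or_ge b.2.1 n with hlt | hge
    · have hpos := exitProb_pos_down (S := {v : V n | σp v = false}) b.1 b.2 hlt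
        (fun j' hj' => by
          show σp (b.1, j') = false
          cases hc : σp (b.1, j')
          · rfl
          · exfalso
            have h1 := hbmax' (b.1, j') hc
            have h2 : rank ((b.1, b.2) : V n) < rank ((b.1, j') : V n) := rank_row_lt b.1 hj'
            rw [Prod.mk.eta] at h2
            omega)
        (by rw [Prod.mk.eta]; simp [Set.mem_setOf_eq, hbmem])
      rw [Prod.mk.eta] at hpos
      exact hpos
    · have htop : top n b.1 = b := by
        refine Prod.ext rfl ?_
        show Fin.last n = b.2
        exact Fin.ext (by have := b.2.2; simp [Fin.val_last]; omega)
      rw [htop, exitProb_of_not_mem b (by simp [Set.mem_setOf_eq, hbmem]), if_pos rfl]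
      norm_num
  refine ⟨recolor n σp b false, K_pos_intro r b hbh hrh, ?_, ?_⟩
  · have h1 := blueCount_recolor_false (σ := σp) hbmem
    have h2 := blueCount_recolor_true (σ := σ) (w := r) hrmem
    rw [← hσp] at h2
    omega
  · have h1 := Phi_recolor_false (σ := σp) hbmem
    have h2 := Phi_recolor_true (σ := σ) (w := r) hrmem
    rw [← hσp] at h2
    omega

lemma reach_sigma0 {n : ℕ} (hn : 2 ≤ n) (σ : Config n) :
    Accessible n σ (sigma0 n (blueCount n σ)) := by
  suffices H : ∀ (N : ℕ) (σ : Config n), Phi n σ ≤ N →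
      Accessible n σ (sigma0 n (blueCount n σ)) from H (Phi n σ) σ (le_refl _)
  intro N
  induction N with
  | zero =>
    intro σ hσ
    by_cases heq : σ = sigma0 n (blueCount n σ)
    · conv_rhs => rw [← heq]
      exact accessible_refl n σ
    · obtain ⟨σ', _, _, hΦ⟩ := move_exists hn σ heq
      omega
  | succ N ih =>
    intro σ hσ
    by_cases heq : σ = sigma0 n (blueCount n σ)
    · conv_rhs => rw [← heq]
      exact accessible_refl n σ
    · obtain ⟨σ', hK, hcount, hΦ⟩ := move_exists hn σ heq
      have acc' := ih σ' (by omega)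
      rw [hcount] at acc'
      exact accessible_trans (accessible_step (accessible_refl n σ) hK) acc'

end Move
section BadStates
open CE Finset

def Bad (n : ℕ) (σ : Config n) (A B : Set (V n)) : Prop :=
  Blocking n A ∧ Blocking n B ∧ Disjoint A B ∧ (∀ v ∈ A, σ v = true) ∧
    (∀ v ∈ B, σ v = false) ∧ Over n A B

lemma step_bad {n : ℕ} {τ σ' : Config n} {A B : Set (V n)}
    (h : 0 < K n τ σ') (hbad : Bad n σ' A B) : Bad n τ A B := by
  obtain ⟨w, w', hσ', hbh, hrh⟩ := K_pos_elim h
  obtain ⟨hABlk, hBBlk, hdisj, hAblue, hBred, hover⟩ := hbad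
  set τp := recolor n τ w true with hτp
  have hτpw : τp w = true := recolor_self τ w true
  have hw'A : w' ∉ A := by
    intro hc
    have h1 : σ' w' = true := hAblue w' hc
    rw [hσ', recolor_self] at h1
    exact Bool.noConfusion h1
  have hAτp : ∀ a ∈ A, τp a = true := by
    intro a ha
    have h1 : σ' a = true := hAblue a ha
    have haw' : a ≠ w' := fun h' => hw'A (h' ▸ ha)
    rw [hσ', recolor_ne _ _ _ _ haw'] at h1
    exact h1
  have hredsubA : {v : V n | τp v = false} ⊆ Aᶜ := by
    intro v hv hvA
    have := hAτp v hvA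
    simp only [Set.mem_setOf_eq] at hv
    rw [this] at hv
    exact Bool.noConfusion hv
  have hw'B : w' ∉ B := by
    intro hw'B
    obtain ⟨x, hx⟩ := redHalf_pos_elim hrh
    have hreach : ReachIn n Aᶜ (top n x) w' := exit_reach hx hredsubA hw'A
    have hsym := reachIn_symm hreach
    exact hover.2 w' hw'B (top n x) (Fin.val_last n) hreach.1 hsym
  have hBτ : ∀ bb ∈ B, τ bb = false := by
    intro bb hbb
    have h1 : σ' bb = false := hBred bb hbb
    have hbw' : bb ≠ w' := fun h' => hw'B (h' ▸ hbb)
    rw [hσ', recolor_ne _ _ _ _ hbw'] at h1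
    have hbw : bb ≠ w := by
      intro h'
      rw [h', hτpw] at h1
      exact Bool.noConfusion h1
    rw [hτp, recolor_ne _ _ _ _ hbw] at h1
    exact h1
  have hbluesubB : {v : V n | τ v = true} ⊆ Bᶜ := by
    intro v hv hvB
    have := hBτ v hvB
    simp only [Set.mem_setOf_eq] at hv
    rw [this] at hv
    exact Bool.noConfusion hv
  have hwA : w ∉ A := by
    intro hwA
    have hwB : w ∉ B := Set.disjoint_left.mp hdisj hwA
    obtain ⟨x, hx⟩ := blueHalf_pos_elim hbh
    have hreach : ReachIn n Bᶜ (bottom n x) w := exit_reach hx hbluesubB hwB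
    have hsym := reachIn_symm hreach
    exact hover.1 w hwA (bottom n x) rfl hreach.1 hsym
  have hAτ : ∀ a ∈ A, τ a = true := by
    intro a ha
    have h1 := hAτp a ha
    have haw : a ≠ w := fun h' => hwA (h' ▸ ha)
    rw [hτp, recolor_ne _ _ _ _ haw] at h1
    exact h1
  exact ⟨hABlk, hBBlk, hdisj, hAτ, hBτ, hover⟩

lemma kpow_bad {n : ℕ} {A B : Set (V n)} :
    ∀ (t : ℕ) (τ σ : Config n), 0 < Kpow n t τ σ → Bad n σ A B → Bad n τ A B := by
  intro t
  induction t with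
  | zero =>
    intro τ σ h hbad
    rw [kpow_zero_elim h]
    exact hbad
  | succ t ih =>
    intro τ σ h hbad
    obtain ⟨ρ, h1, h2⟩ := kpow_succ_elim h
    exact ih τ ρ h1 (step_bad h2 hbad)

lemma sigma0_good {n m : ℕ} (hn : 0 < n) {A B : Set (V n)}
    (h : Bad n (sigma0 n m) A B) : False := by
  obtain ⟨hABlk, hBBlk, hdisj, hAblue, hBred, hover⟩ := h
  rcases Set.eq_empty_or_nonempty A with hA | ⟨a, haA⟩
  · subst hA
    have hre : ReachIn n (∅ : Set (V n))ᶜ ((⟨0, hn⟩ : Fin n), (0 : Fin (n + 1)))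
        ((⟨0, hn⟩ : Fin n), Fin.last n) := by
      refine ⟨by simp, ?_⟩
      have hcol := col_rtg (T := (∅ : Set (V n))ᶜ) ⟨0, hn⟩ n 0 (by omega)
        (fun j _ _ => by simp)
      convert hcol using 2
      all_goals exact Fin.ext (by simp [Fin.val_last])
    exact hABlk.2 _ _ rfl (by simp) (Fin.val_last n) (by simp) hre
  · have hrank : rank a < m := by
      have := hAblue a haA
      unfold sigma0 at this
      exact of_decide_eq_true this
    unfold rank at hrank
    have hcolmem : ∀ (j : ℕ) (_ : 0 ≤ j) (_ : j ≤ 0 + a.2.1),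
        ((a.1, ⟨j, by have := a.2.2; omega⟩) : V n) ∈ Bᶜ := by
      intro j _ hj2
      have hb : sigma0 n m ((a.1, ⟨j, by have := a.2.2; omega⟩) : V n) = true := by
        apply decide_eq_true
        have h2 : j * n ≤ a.2.1 * n := Nat.mul_le_mul_right n (by omega)
        have h3 := a.1.2
        unfold rank
        simp only
        omega
      intro hB
      rw [hBred _ hB] at hb
      exact Bool.noConfusion hb
    have hcol := col_rtg (T := Bᶜ) a.1 a.2.1 0 (by have := a.2.2; omega) hcolmem
    have hreach : ReachIn n Bᶜ ((a.1, (0 : Fin (n + 1))) : V n) a := by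
      refine ⟨?_, ?_⟩
      · exact hcolmem 0 (le_refl 0) (by omega)
      · convert hcol using 2
        all_goals exact Fin.ext (by simp)
    exact hover.1 a haA (a.1, (0 : Fin (n + 1))) rfl hreach.1 (reachIn_symm hreach)

end BadStates

section Final
open CE

lemma hm_le {α : ℝ} (hα1 : α < 1) (n : ℕ) :
    ⌊α * ((n : ℝ) * (n + 1))⌋₊ ≤ n * (n + 1) := by
  have hX : (0:ℝ) ≤ (n : ℝ) * (n + 1) := by positivity
  have h1 : α * ((n : ℝ) * (n + 1)) ≤ (n : ℝ) * (n + 1) := by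
    calc α * ((n : ℝ) * (n + 1)) ≤ 1 * ((n : ℝ) * (n + 1)) :=
          mul_le_mul_of_nonneg_right (le_of_lt hα1) hX
      _ = (n : ℝ) * (n + 1) := one_mul _
  calc ⌊α * ((n : ℝ) * (n + 1))⌋₊ ≤ ⌊(n : ℝ) * (n + 1)⌋₊ := Nat.floor_mono h1
    _ = ⌊((n * (n + 1) : ℕ) : ℝ)⌋₊ := by push_cast; ring_nf
    _ = n * (n + 1) := Nat.floor_natCast _

end Final

/-- Lemma 2.3.  The competitive erosion chain on `Cyl_n`
has exactly one irreducible class (the recurrent states form a single,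
nonempty communicating class); moreover any `σ ∈ Ω` containing a blue
blocking set lying over a red blocking set is transient. -/
theorem unique_irreducible_class_and_transience (α : ℝ) (hα : 0 < α ∧ α < 1)
    (n : ℕ) (hn : 2 ≤ n) :
    ((∃ σ : CE.Config n, CE.Recurrent α n σ) ∧
      ∀ σ σ' : CE.Config n, CE.Recurrent α n σ → CE.Recurrent α n σ' →
        CE.Accessible n σ σ') ∧
    ∀ σ : CE.Config n, CE.memOmega α n σ →
      (∃ A B : Set (CE.V n), CE.Blocking n A ∧ CE.Blocking n B ∧ Disjoint A B ∧
        (∀ v ∈ A, σ v = true) ∧ (∀ v ∈ B, σ v = false) ∧ CE.Over n A B) →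
      ¬ CE.Recurrent α n σ := by
  have hn0 : 0 < n := by omega
  set m := ⌊α * ((n : ℝ) * (n + 1))⌋₊ with hmdef
  have hm : m ≤ n * (n + 1) := hm_le hα.2 n
  have hmem0 : CE.memOmega α n (sigma0 n m) := blueCount_sigma0 n m hm
  have hreach : ∀ σ : CE.Config n, CE.memOmega α n σ →
      CE.Accessible n σ (sigma0 n m) := by
    intro σ hσ
    have h1 := reach_sigma0 hn σ
    have hσ' : CE.blueCount n σ = m := hσ
    rw [hσ'] at h1
    exact h1
  refine ⟨⟨⟨sigma0 n m, hmem0, ?_⟩, ?_⟩, ?_⟩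
  · intro σ' hσ' _
    exact hreach σ' hσ'
  · intro σ σ' h h'
    exact accessible_trans (hreach σ h.1) (h'.2 (sigma0 n m) hmem0 (hreach σ' h'.1))
  · rintro σ hσ ⟨A, B, hABlk, hBBlk, hdisj, hAb, hBr, hov⟩ hrec
    have hbad : Bad n σ A B := ⟨hABlk, hBBlk, hdisj, hAb, hBr, hov⟩
    obtain ⟨t, ht⟩ := hrec.2 (sigma0 n m) hmem0 (hreach σ hσ)
    exact sigma0_good hn0 (kpow_bad t (sigma0 n m) σ ht hbad)
end Paths
end

section
/- For every σ ∈ Ω, one step of the competitive erosion chain satisfies E(h(σ₁) − h(σ₀) | σ₀ = σ) = (1/n)·E_{σ₀}[ Σ_{w ∈ C_n×{1}} H_{R₂(σ_{1/2})}(w) ] − (1/n)·Σ_{v ∈ C_n×{0}} H_{R₁(σ₀)}(v), where σ₀, σ_{1/2}, σ₁ are successive (half-)steps of the chain. -/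
open scoped BigOperators Classical

namespace CE

open Finset

variable {n : ℕ}

lemma step_nonneg (v w : V n) : 0 ≤ step n v w := by
  unfold step; positivity

lemma edgeCount_rowsum (hn : 1 ≤ n) (v : V n) :
    ∑ w : V n, edgeCount n v w = 4 := by
  obtain ⟨x, j⟩ := v
  have hx : x.1 < n := x.2
  have hj : j.1 < n + 1 := j.2
  unfold edgeCount
  rw [Fintype.sum_prod_type]
  simp only [Finset.sum_add_distrib]
  have h1 : (∑ a : Fin n, ∑ b : Fin (n+1),
      (if (x, j).1 = (a, b).1 then
        (if (x,j).2.1 + 1 = (a,b).2.1 then 1 else 0) + (if (a,b).2.1 + 1 = (x,j).2.1 then 1 else 0)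
      else 0)) = (if j.1 + 1 ≤ n then 1 else 0) + (if 1 ≤ j.1 then 1 else 0) := by
    simp only
    rw [Finset.sum_comm]
    simp only [Finset.sum_ite_eq, Finset.mem_univ, if_true]
    rw [Finset.sum_add_distrib]
    have e1 : (∑ b : Fin (n+1), (if j.1 + 1 = b.1 then (1:ℕ) else 0))
        = (if j.1 + 1 ≤ n then 1 else 0) := by
      rw [Fin.sum_univ_eq_sum_range (fun i => if j.1 + 1 = i then (1:ℕ) else 0) (n+1)]
      rw [Finset.sum_ite_eq]
      simp only [Finset.mem_range]
      split_ifs <;> omega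
    have e2 : (∑ b : Fin (n+1), (if b.1 + 1 = j.1 then (1:ℕ) else 0))
        = (if 1 ≤ j.1 then 1 else 0) := by
      rw [Fin.sum_univ_eq_sum_range (fun i => if i + 1 = j.1 then (1:ℕ) else 0) (n+1)]
      have : ∀ i ∈ Finset.range (n+1), (if i + 1 = j.1 then (1:ℕ) else 0)
          = (if j.1 - 1 = i then (if 1 ≤ j.1 then (1:ℕ) else 0) else 0) := by
        intro i hi
        simp only [Finset.mem_range] at hi
        split_ifs <;> omega
      rw [Finset.sum_congr rfl this, Finset.sum_ite_eq]
      simp only [Finset.mem_range]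
      split_ifs <;> omega
    rw [e1, e2]
  have h2 : (∑ a : Fin n, ∑ b : Fin (n+1),
      (if (x, j).2 = (a, b).2 then
        (if ((x,j).1.1 + 1) % n = (a,b).1.1 then 1 else 0) + (if ((a,b).1.1 + 1) % n = (x,j).1.1 then 1 else 0)
      else 0)) = 2 := by
    simp only
    have : ∀ a : Fin n, (∑ b : Fin (n+1), (if j = b then
        ((if (x.1 + 1) % n = a.1 then (1:ℕ) else 0) + (if (a.1 + 1) % n = x.1 then 1 else 0)) else 0))
        = (if (x.1 + 1) % n = a.1 then (1:ℕ) else 0) + (if (a.1 + 1) % n = x.1 then 1 else 0) := by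
      intro a
      rw [Finset.sum_ite_eq]
      simp
    rw [Finset.sum_congr rfl (fun a _ => this a), Finset.sum_add_distrib]
    have e1 : (∑ a : Fin n, (if (x.1 + 1) % n = a.1 then (1:ℕ) else 0)) = 1 := by
      rw [Fin.sum_univ_eq_sum_range (fun i => if (x.1 + 1) % n = i then (1:ℕ) else 0) n]
      rw [Finset.sum_ite_eq]
      simp only [Finset.mem_range]
      rw [if_pos (Nat.mod_lt _ (by omega))]
    have e2 : (∑ a : Fin n, (if (a.1 + 1) % n = x.1 then (1:ℕ) else 0)) = 1 := by
      rw [Fin.sum_univ_eq_sum_range (fun i => if (i + 1) % n = x.1 then (1:ℕ) else 0) n]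
      have key : ∀ i ∈ Finset.range n, (if (i + 1) % n = x.1 then (1:ℕ) else 0)
          = (if (if x.1 = 0 then n - 1 else x.1 - 1) = i then (1:ℕ) else 0) := by
        intro i hi
        simp only [Finset.mem_range] at hi
        have hmod : (i + 1) % n = if i + 1 = n then 0 else i + 1 := by
          rcases eq_or_ne (i + 1) n with h | h
          · simp [h, Nat.mod_self]
          · rw [Nat.mod_eq_of_lt (by omega)]; simp [h]
        split_ifs at hmod ⊢ <;> omega
      rw [Finset.sum_congr rfl key, Finset.sum_ite_eq]
      simp only [Finset.mem_range]
      split_ifs <;> omega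
    rw [e1, e2]
  have h3 : (∑ a : Fin n, ∑ b : Fin (n+1),
      (if (x, j) = (a, b) ∧ ((x,j).2.1 = 0 ∨ (x,j).2.1 = n) then (1:ℕ) else 0))
      = (if j.1 = 0 ∨ j.1 = n then 1 else 0) := by
    simp only
    by_cases hQ : j.1 = 0 ∨ j.1 = n
    · simp only [hQ, and_true, if_pos]
      simp [Prod.mk.injEq, ite_and, Finset.sum_ite_eq]
    · rw [if_neg hQ]
      exact Finset.sum_eq_zero fun a _ => Finset.sum_eq_zero fun b _ => if_neg (fun h => hQ h.2)
  rw [h1, h2, h3]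
  split_ifs <;> omega

lemma step_rowsum (hn : 1 ≤ n) (v : V n) : ∑ w : V n, step n v w = 1 := by
  unfold step
  rw [← Finset.sum_div]
  rw [show (∑ w : V n, (edgeCount n v w : ℝ)) = ((∑ w : V n, edgeCount n v w : ℕ) : ℝ) by push_cast; ring]
  rw [edgeCount_rowsum hn v]
  norm_num

lemma step_le_one (hn : 1 ≤ n) (v w : V n) : step n v w ≤ 1 := by
  have h := step_rowsum hn v
  have : step n v w ≤ ∑ w' : V n, step n v w' :=
    Finset.single_le_sum (fun w' _ => step_nonneg v w') (Finset.mem_univ w)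
  linarith

/-- Survival probability: the walk started at `v` stays in `S` for `t` steps. -/
noncomputable def surv (S : Set (V n)) (t : ℕ) (v : V n) : ℝ :=
  ∑ q : Fin (t + 1) → V n,
    if q 0 = v ∧ (∀ i : Fin (t + 1), q i ∈ S) then
      ∏ i : Fin t, step n (q i.castSucc) (q i.succ)
    else 0

lemma surv_zero (S : Set (V n)) (v : V n) : surv S 0 v = if v ∈ S then 1 else 0 := by
  unfold surv
  rw [← ((Equiv.funUnique (Fin 1) (V n)).symm).sum_comp]
  have : ∀ u : V n,
      (if (Equiv.funUnique (Fin 1) (V n)).symm u 0 = v ∧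
          (∀ i : Fin 1, (Equiv.funUnique (Fin 1) (V n)).symm u i ∈ S) then
        ∏ i : Fin 0, step n ((Equiv.funUnique (Fin 1) (V n)).symm u i.castSucc)
          ((Equiv.funUnique (Fin 1) (V n)).symm u i.succ) else 0)
      = if u = v ∧ u ∈ S then 1 else 0 := by
    intro u
    simp [Equiv.funUnique]
  rw [Finset.sum_congr rfl fun u _ => this u]
  simp [ite_and, Finset.sum_ite_eq']

lemma surv_nonneg (S : Set (V n)) (t : ℕ) (v : V n) : 0 ≤ surv S t v := by
  refine Finset.sum_nonneg fun q _ => ?_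
  split_ifs
  · exact Finset.prod_nonneg fun i _ => step_nonneg _ _
  · exact le_refl 0
  
lemma surv_succ (S : Set (V n)) (t : ℕ) (v : V n) :
    surv S (t + 1) v = if v ∈ S then ∑ w : V n, step n v w * surv S t w else 0 := by
  unfold surv
  rw [← (Fin.consEquiv (fun _ : Fin (t + 2) => V n)).sum_comp, Fintype.sum_prod_type]
  have key : ∀ (a : V n) (q : Fin (t + 1) → V n),
      (if (Fin.consEquiv (fun _ : Fin (t + 2) => V n)) (a, q) 0 = v ∧
          (∀ i : Fin (t + 2), (Fin.consEquiv (fun _ : Fin (t + 2) => V n)) (a, q) i ∈ S) then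
        ∏ i : Fin (t + 1), step n ((Fin.consEquiv (fun _ : Fin (t + 2) => V n)) (a, q) i.castSucc)
          ((Fin.consEquiv (fun _ : Fin (t + 2) => V n)) (a, q) i.succ) else 0)
      = if a = v ∧ a ∈ S ∧ (∀ i : Fin (t + 1), q i ∈ S) then
          step n a (q 0) * ∏ i : Fin t, step n (q i.castSucc) (q i.succ) else 0 := by
    intro a q
    have hc : (∀ i : Fin (t + 2), Fin.cons (α := fun _ : Fin (t+2) => V n) a q i ∈ S) ↔ a ∈ S ∧ ∀ i : Fin (t + 1), q i ∈ S := by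
      rw [Fin.forall_fin_succ]
      simp
    have hp : (∏ i : Fin (t + 1), step n (Fin.cons (α := fun _ : Fin (t+2) => V n) a q i.castSucc) (Fin.cons (α := fun _ : Fin (t+2) => V n) a q i.succ))
        = step n a (q 0) * ∏ i : Fin t, step n (q i.castSucc) (q i.succ) := by
      rw [Fin.prod_univ_succ]
      refine congrArg₂ (· * ·) rfl ?_
      refine Finset.prod_congr rfl fun i _ => ?_
      rw [← Fin.succ_castSucc]
      simp
    show (if Fin.cons (α := fun _ : Fin (t+2) => V n) a q 0 = v ∧ (∀ i : Fin (t + 2), Fin.cons (α := fun _ : Fin (t+2) => V n) a q i ∈ S) then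
        ∏ i : Fin (t + 1), step n (Fin.cons (α := fun _ : Fin (t+2) => V n) a q i.castSucc) (Fin.cons (α := fun _ : Fin (t+2) => V n) a q i.succ) else 0) = _
    simp only [Fin.cons_zero, hc, hp, and_assoc]
  rw [Finset.sum_congr rfl fun a _ => Finset.sum_congr rfl fun q _ => key a q]
  have collapse : ∀ a : V n, (∑ q : Fin (t + 1) → V n,
      if a = v ∧ a ∈ S ∧ (∀ i : Fin (t + 1), q i ∈ S) then
        step n a (q 0) * ∏ i : Fin t, step n (q i.castSucc) (q i.succ) else 0)
      = if a = v then (if a ∈ S then (∑ q : Fin (t + 1) → V n,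
          if (∀ i : Fin (t + 1), q i ∈ S) then
            step n a (q 0) * ∏ i : Fin t, step n (q i.castSucc) (q i.succ) else 0) else 0) else 0 := by
    intro a
    by_cases h1 : a = v
    · subst h1
      by_cases h2 : a ∈ S
      · simp [h2]
      · simp [h2]
    · simp [h1]
  rw [Finset.sum_congr rfl fun a _ => collapse a, Finset.sum_ite_eq']
  simp only [Finset.mem_univ, if_true]
  by_cases hv : v ∈ S
  · rw [if_pos hv, if_pos hv]
    have rhs : ∀ w : V n, (step n v w * ∑ q : Fin (t + 1) → V n,
        if q 0 = w ∧ (∀ i : Fin (t + 1), q i ∈ S) then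
          ∏ i : Fin t, step n (q i.castSucc) (q i.succ) else 0)
        = ∑ q : Fin (t + 1) → V n,
          if q 0 = w ∧ (∀ i : Fin (t + 1), q i ∈ S) then
            step n v w * ∏ i : Fin t, step n (q i.castSucc) (q i.succ) else 0 := by
      intro w
      rw [Finset.mul_sum]
      exact Finset.sum_congr rfl fun q _ => by split_ifs <;> simp
    rw [Finset.sum_congr rfl fun w _ => rhs w, Finset.sum_comm]
    refine Finset.sum_congr rfl fun q _ => ?_
    have hw : ∀ w : V n, (if q 0 = w ∧ (∀ i : Fin (t + 1), q i ∈ S) then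
        step n v w * ∏ i : Fin t, step n (q i.castSucc) (q i.succ) else 0)
        = if q 0 = w then (if (∀ i : Fin (t + 1), q i ∈ S) then
            step n v w * ∏ i : Fin t, step n (q i.castSucc) (q i.succ) else 0) else 0 := by
      intro w; split_ifs <;> tauto
    rw [Finset.sum_congr rfl fun w _ => hw w, Finset.sum_ite_eq]
    simp only [Finset.mem_univ, if_true]
  · rw [if_neg hv, if_neg hv]

lemma surv_notmem (S : Set (V n)) (t : ℕ) {v : V n} (hv : v ∉ S) : surv S t v = 0 := by
  cases t with
  | zero => rw [surv_zero, if_neg hv]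
  | succ t => rw [surv_succ, if_neg hv]

lemma surv_le_one (hn : 1 ≤ n) (S : Set (V n)) (t : ℕ) (v : V n) : surv S t v ≤ 1 := by
  induction t generalizing v with
  | zero => rw [surv_zero]; split_ifs <;> norm_num
  | succ t ih =>
      rw [surv_succ]
      split_ifs
      · calc ∑ w : V n, step n v w * surv S t w
            ≤ ∑ w : V n, step n v w * 1 := by
              refine Finset.sum_le_sum fun w _ => ?_
              exact mul_le_mul_of_nonneg_left (ih w) (step_nonneg v w)
          _ = 1 := by simp [step_rowsum hn]
      · norm_num

lemma surv_succ_le (hn : 1 ≤ n) (S : Set (V n)) (t : ℕ) (v : V n) :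
    surv S (t + 1) v ≤ surv S t v := by
  induction t generalizing v with
  | zero =>
      rw [surv_succ, surv_zero]
      split_ifs
      · calc ∑ w : V n, step n v w * surv S 0 w
            ≤ ∑ w : V n, step n v w * 1 := by
              refine Finset.sum_le_sum fun w _ => ?_
              exact mul_le_mul_of_nonneg_left (surv_le_one hn S 0 w) (step_nonneg v w)
          _ = 1 := by simp [step_rowsum hn]
      · exact le_refl 0
  | succ t ih =>
      rw [surv_succ S (t + 1) v, surv_succ S t v]
      split_ifs
      · exact Finset.sum_le_sum fun w _ =>
          mul_le_mul_of_nonneg_left (ih w) (step_nonneg v w)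
      · exact le_refl 0

lemma surv_anti (hn : 1 ≤ n) (S : Set (V n)) {a b : ℕ} (h : a ≤ b) (v : V n) :
    surv S b v ≤ surv S a v := by
  induction b with
  | zero => cases Nat.le_zero.mp h; exact le_refl _
  | succ b ih =>
      rcases Nat.lt_or_ge a (b + 1) with h' | h'
      · exact le_trans (surv_succ_le hn S b v) (ih (by omega))
      · have : a = b + 1 := by omega
        subst this; exact le_refl _
lemma surv_path_bound (hn : 1 ≤ n) (S : Set (V n)) :
    ∀ (t : ℕ) (p : ℕ → V n), (∃ k ≤ t, p k ∉ S) →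
      surv S t (p 0) ≤ 1 - ∏ i ∈ Finset.range t, step n (p i) (p (i + 1)) := by
  intro t
  induction t with
  | zero =>
      intro p hp
      obtain ⟨k, hk, hkS⟩ := hp
      have hk0 : k = 0 := Nat.le_zero.mp hk
      subst hk0
      rw [surv_zero, if_neg hkS]
      simp
  | succ t ih =>
      intro p hp
      by_cases h0 : p 0 ∈ S
      · obtain ⟨k, hk, hkS⟩ := hp
        have hk0 : k ≠ 0 := fun h => hkS (by rw [h]; exact h0)
        have hp' : ∃ k' ≤ t, (fun i => p (i + 1)) k' ∉ S :=
          ⟨k - 1, by omega, by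
            have : k - 1 + 1 = k := by omega
            simpa [this] using hkS⟩
        have IH := ih (fun i => p (i + 1)) hp'
        rw [surv_succ, if_pos h0]
        have split : ∑ w : V n, step n (p 0) w * surv S t w
            = step n (p 0) (p 1) * surv S t (p 1)
              + ∑ w ∈ Finset.univ.erase (p 1), step n (p 0) w * surv S t w := by
          rw [← Finset.add_sum_erase _ _ (Finset.mem_univ (p 1))]
        rw [split]
        have b1 : step n (p 0) (p 1) * surv S t (p 1)
            ≤ step n (p 0) (p 1) * (1 - ∏ i ∈ Finset.range t, step n (p (i+1)) (p (i+1+1))) :=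
          mul_le_mul_of_nonneg_left IH (step_nonneg _ _)
        have b2 : ∑ w ∈ Finset.univ.erase (p 1), step n (p 0) w * surv S t w
            ≤ ∑ w ∈ Finset.univ.erase (p 1), step n (p 0) w := by
          refine Finset.sum_le_sum fun w _ => ?_
          calc step n (p 0) w * surv S t w ≤ step n (p 0) w * 1 :=
                mul_le_mul_of_nonneg_left (surv_le_one hn S t w) (step_nonneg _ _)
            _ = step n (p 0) w := mul_one _
        have hsum : ∑ w ∈ Finset.univ.erase (p 1), step n (p 0) w
            = 1 - step n (p 0) (p 1) := by
          have h := step_rowsum hn (p 0)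
          rw [← Finset.add_sum_erase _ _ (Finset.mem_univ (p 1))] at h
          linarith
        have hprod : ∏ i ∈ Finset.range (t+1), step n (p i) (p (i+1))
            = (∏ i ∈ Finset.range t, step n (p (i+1)) (p (i+1+1))) * step n (p 0) (p 1) :=
          Finset.prod_range_succ' _ t
        rw [hprod]
        have expand : step n (p 0) (p 1) *
            (1 - ∏ i ∈ Finset.range t, step n (p (i+1)) (p (i+1+1)))
            = step n (p 0) (p 1)
              - (∏ i ∈ Finset.range t, step n (p (i+1)) (p (i+1+1))) * step n (p 0) (p 1) := by
          ring
        linarith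
      · rw [surv_notmem S _ h0]
        have hle : ∏ i ∈ Finset.range (t+1), step n (p i) (p (i+1)) ≤ 1 :=
          Finset.prod_le_one (fun i _ => step_nonneg _ _) (fun i _ => step_le_one hn _ _)
        linarith

/-- An explicit walk from `u` to `z` : down to the bottom row, around the
cycle, then up. -/
noncomputable def pathTo (hn : 1 ≤ n) (u z : V n) : ℕ → V n := fun i =>
  if i ≤ u.2.1 then (u.1, ⟨u.2.1 - i, lt_of_le_of_lt (Nat.sub_le _ _) u.2.2⟩)
  else if i ≤ u.2.1 + (z.1.1 + n - u.1.1) % n then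
    (⟨(u.1.1 + (i - u.2.1)) % n, Nat.mod_lt _ hn⟩, ⟨0, Nat.succ_pos n⟩)
  else (z.1, ⟨min (i - u.2.1 - (z.1.1 + n - u.1.1) % n) z.2.1,
    lt_of_le_of_lt (min_le_right _ _) z.2.2⟩)

lemma cyc_eq_zero (hn : 1 ≤ n) (a b : Fin n) (h : (b.1 + n - a.1) % n = 0) : a = b := by
  have ha := a.2
  have hb := b.2
  obtain ⟨m, hm⟩ := Nat.dvd_of_mod_eq_zero h
  rcases m with _ | m
  · simp at hm; omega
  rcases m with _ | m
  · rw [Nat.mul_one] at hm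
    exact Fin.ext (by omega)
  · have hexp : n * (m + 1 + 1) = n * m + n + n := by ring
    rw [hexp] at hm
    set K := n * m with hK
    omega

lemma cyc_add (hn : 1 ≤ n) (a b : Fin n) : (a.1 + (b.1 + n - a.1) % n) % n = b.1 := by
  rw [Nat.add_mod_mod]
  have ha := a.2
  have hb := b.2
  have h : a.1 + (b.1 + n - a.1) = b.1 + n := by omega
  rw [h, Nat.add_mod_right, Nat.mod_eq_of_lt hb]

lemma pathTo_A (hn : 1 ≤ n) (u z : V n) {i : ℕ} (hi : i ≤ u.2.1) :
    pathTo hn u z i = (u.1, ⟨u.2.1 - i, lt_of_le_of_lt (Nat.sub_le _ _) u.2.2⟩) := by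
  unfold pathTo; rw [if_pos hi]

lemma pathTo_B (hn : 1 ≤ n) (u z : V n) {i : ℕ} (h1 : u.2.1 ≤ i)
    (h2 : i ≤ u.2.1 + (z.1.1 + n - u.1.1) % n) :
    pathTo hn u z i = (⟨(u.1.1 + (i - u.2.1)) % n, Nat.mod_lt _ hn⟩, ⟨0, Nat.succ_pos n⟩) := by
  unfold pathTo
  by_cases hA : i ≤ u.2.1
  · rw [if_pos hA]
    have hi : i = u.2.1 := le_antisymm hA h1
    subst hi
    refine Prod.ext ?_ ?_
    · exact Fin.ext (by simp [Nat.mod_eq_of_lt u.1.2])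
    · exact Fin.ext (by simp)
  · rw [if_neg hA, if_pos h2]

lemma pathTo_C (hn : 1 ≤ n) (u z : V n) {i : ℕ}
    (h : u.2.1 + (z.1.1 + n - u.1.1) % n ≤ i) :
    pathTo hn u z i = (z.1, ⟨min (i - u.2.1 - (z.1.1 + n - u.1.1) % n) z.2.1,
      lt_of_le_of_lt (min_le_right _ _) z.2.2⟩) := by
  unfold pathTo
  by_cases hA : i ≤ u.2.1
  · rw [if_pos hA]
    have hc0 : (z.1.1 + n - u.1.1) % n = 0 := by omega
    have hi : i = u.2.1 := by omega
    subst hi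
    have hz : u.1 = z.1 := cyc_eq_zero hn u.1 z.1 hc0
    refine Prod.ext ?_ ?_
    · exact hz
    · exact Fin.ext (by simp [hc0])
  · by_cases hB : i ≤ u.2.1 + (z.1.1 + n - u.1.1) % n
    · rw [if_neg hA, if_pos hB]
      have hi : i = u.2.1 + (z.1.1 + n - u.1.1) % n := le_antisymm hB h
      refine Prod.ext ?_ ?_
      · refine Fin.ext ?_
        show (u.1.1 + (i - u.2.1)) % n = z.1.1
        have : i - u.2.1 = (z.1.1 + n - u.1.1) % n := by omega
        rw [this]
        exact cyc_add hn u.1 z.1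
      · exact Fin.ext (by simp; omega)
    · rw [if_neg hA, if_neg hB]

lemma edge_vert (x : Fin n) (a b : Fin (n+1)) (h : a.1 + 1 = b.1 ∨ b.1 + 1 = a.1) :
    1 ≤ edgeCount n (x, a) (x, b) := by
  show 1 ≤ (if x = x then (if a.1 + 1 = b.1 then 1 else 0) + (if b.1 + 1 = a.1 then 1 else 0) else 0)
      + (if a = b then (if (x.1 + 1) % n = x.1 then 1 else 0) + (if (x.1 + 1) % n = x.1 then 1 else 0) else 0)
      + (if (x, a) = (x, b) ∧ (a.1 = 0 ∨ a.1 = n) then 1 else 0)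
  rw [if_pos rfl]
  split_ifs <;> omega

lemma edge_horiz (j : Fin (n+1)) (x y : Fin n) (h : (x.1 + 1) % n = y.1) :
    1 ≤ edgeCount n (x, j) (y, j) := by
  show 1 ≤ (if x = y then (if j.1 + 1 = j.1 then 1 else 0) + (if j.1 + 1 = j.1 then 1 else 0) else 0)
      + (if j = j then (if (x.1 + 1) % n = y.1 then 1 else 0) + (if (y.1 + 1) % n = x.1 then 1 else 0) else 0)
      + (if (x, j) = (y, j) ∧ (j.1 = 0 ∨ j.1 = n) then 1 else 0)
  rw [if_pos rfl]
  split_ifs <;> omega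

lemma pathTo_step (hn : 1 ≤ n) (u z : V n) {i : ℕ}
    (hi : i < u.2.1 + (z.1.1 + n - u.1.1) % n + z.2.1) :
    1 ≤ edgeCount n (pathTo hn u z i) (pathTo hn u z (i + 1)) := by
  rcases Nat.lt_or_ge i u.2.1 with h1 | h1
  · rw [pathTo_A hn u z (le_of_lt h1), pathTo_A hn u z (by omega)]
    apply edge_vert
    right
    simp only
    omega
  · rcases Nat.lt_or_ge i (u.2.1 + (z.1.1 + n - u.1.1) % n) with h2 | h2
    · rw [pathTo_B hn u z h1 (le_of_lt h2), pathTo_B hn u z (by omega) (by omega)]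
      apply edge_horiz
      simp only
      rw [Nat.mod_add_mod]
      congr 1
      omega
    · rw [pathTo_C hn u z h2, pathTo_C hn u z (by omega)]
      apply edge_vert
      left
      simp only
      have e1 : min (i - u.2.1 - (z.1.1 + n - u.1.1) % n) z.2.1
          = i - u.2.1 - (z.1.1 + n - u.1.1) % n := min_eq_left (by omega)
      have e2 : min (i + 1 - u.2.1 - (z.1.1 + n - u.1.1) % n) z.2.1
          = i + 1 - u.2.1 - (z.1.1 + n - u.1.1) % n := min_eq_left (by omega)
      rw [e1, e2]
      omega

lemma pathTo_zero (hn : 1 ≤ n) (u z : V n) : pathTo hn u z 0 = u := by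
  rw [pathTo_A hn u z (Nat.zero_le _)]
  have h2 : (⟨u.2.1 - 0, lt_of_le_of_lt (Nat.sub_le _ _) u.2.2⟩ : Fin (n+1)) = u.2 :=
    Fin.ext (by simp)
  rw [h2]

lemma pathTo_end (hn : 1 ≤ n) (u z : V n) :
    pathTo hn u z (u.2.1 + (z.1.1 + n - u.1.1) % n + z.2.1) = z := by
  rw [pathTo_C hn u z (by omega)]
  have h2 : (⟨min (u.2.1 + (z.1.1 + n - u.1.1) % n + z.2.1 - u.2.1 - (z.1.1 + n - u.1.1) % n)
      z.2.1, lt_of_le_of_lt (min_le_right _ _) z.2.2⟩ : Fin (n+1)) = z.2 :=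
    Fin.ext (by simp; omega)
  rw [h2]

lemma surv_uniform (hn : 1 ≤ n) (S : Set (V n)) (hS : ∃ z, z ∉ S) (u : V n) :
    surv S (3 * n) u ≤ 1 - (1/4 : ℝ) ^ (3 * n) := by
  obtain ⟨z, hz⟩ := hS
  have hcn : (z.1.1 + n - u.1.1) % n < n := Nat.mod_lt _ hn
  set T := u.2.1 + (z.1.1 + n - u.1.1) % n + z.2.1 with hT
  have hTm : T ≤ 3 * n := by
    have h1 := u.2.2
    have h2 := z.2.2
    omega
  have hbound := surv_path_bound hn S T (pathTo hn u z)
    ⟨T, le_refl _, by rw [pathTo_end hn u z]; exact hz⟩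
  rw [pathTo_zero hn u z] at hbound
  have hprod : (1/4 : ℝ) ^ T ≤ ∏ i ∈ Finset.range T,
      step n (pathTo hn u z i) (pathTo hn u z (i+1)) := by
    have hcard : ((1:ℝ)/4) ^ T = ∏ _i ∈ Finset.range T, ((1:ℝ)/4) := by
      rw [Finset.prod_const, Finset.card_range]
    rw [hcard]
    refine Finset.prod_le_prod (fun i _ => by norm_num) (fun i hi => ?_)
    have hstep := pathTo_step hn u z (show i < T from Finset.mem_range.mp hi)
    unfold step
    have h4 : (1 : ℝ) ≤ (edgeCount n (pathTo hn u z i) (pathTo hn u z (i+1)) : ℝ) := by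
      exact_mod_cast hstep
    linarith
  have hmono : (1/4:ℝ)^(3*n) ≤ (1/4:ℝ)^T :=
    pow_le_pow_of_le_one (by norm_num) (by norm_num) hTm
  have hanti := surv_anti hn S hTm u
  linarith

lemma surv_mul_bound (hn : 1 ≤ n) (S : Set (V n)) (b : ℕ) (B : ℝ)
    (hB : ∀ u, surv S b u ≤ B) (hB0 : 0 ≤ B) :
    ∀ (a : ℕ) (v : V n), surv S (a + b) v ≤ surv S a v * B := by
  intro a
  induction a with
  | zero =>
      intro v
      rw [Nat.zero_add, surv_zero]
      by_cases hv : v ∈ S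
      · rw [if_pos hv, one_mul]
        exact hB v
      · rw [if_neg hv, zero_mul, surv_notmem S b hv]
  | succ a ih =>
      intro v
      have hab : a + 1 + b = (a + b) + 1 := by omega
      rw [hab, surv_succ, surv_succ S a v]
      by_cases hv : v ∈ S
      · rw [if_pos hv, if_pos hv, Finset.sum_mul]
        refine Finset.sum_le_sum fun w _ => ?_
        rw [mul_assoc]
        exact mul_le_mul_of_nonneg_left (ih w) (step_nonneg _ _)
      · rw [if_neg hv, if_neg hv, zero_mul]

lemma surv_pow (hn : 1 ≤ n) (S : Set (V n)) (hS : ∃ z, z ∉ S) :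
    ∀ (k : ℕ) (v : V n), surv S (k * (3 * n)) v ≤ (1 - (1/4:ℝ)^(3*n))^k := by
  have hB0 : (0:ℝ) ≤ 1 - (1/4)^(3*n) := by
    have h1 : ((1:ℝ)/4)^(3*n) ≤ 1 := pow_le_one₀ (by norm_num) (by norm_num)
    linarith
  intro k
  induction k with
  | zero =>
      intro v
      rw [Nat.zero_mul, surv_zero, pow_zero]
      split_ifs <;> norm_num
  | succ k ih =>
      intro v
      have hk1 : (k+1) * (3*n) = k * (3*n) + 3*n := by ring
      rw [hk1, pow_succ]
      calc surv S (k*(3*n) + 3*n) v ≤ surv S (k*(3*n)) v * (1 - (1/4:ℝ)^(3*n)) :=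
            surv_mul_bound hn S (3*n) _ (surv_uniform hn S hS) hB0 _ v
        _ ≤ (1 - (1/4:ℝ)^(3*n))^k * (1 - (1/4:ℝ)^(3*n)) :=
            mul_le_mul_of_nonneg_right (ih v) hB0

lemma surv_tendsto (hn : 1 ≤ n) (S : Set (V n)) (hS : ∃ z, z ∉ S) (v : V n) :
    Filter.Tendsto (fun t => surv S t v) Filter.atTop (nhds 0) := by
  rw [Metric.tendsto_atTop]
  intro ε hε
  have hB1 : (1 - (1/4:ℝ)^(3*n)) < 1 := by
    have h1 : (0:ℝ) < (1/4)^(3*n) := by positivity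
    linarith
  have hB0 : (0:ℝ) ≤ 1 - (1/4:ℝ)^(3*n) := by
    have h1 : ((1:ℝ)/4)^(3*n) ≤ 1 := pow_le_one₀ (by norm_num) (by norm_num)
    linarith
  obtain ⟨k, hk⟩ := exists_pow_lt_of_lt_one hε hB1
  refine ⟨k * (3*n), fun t ht => ?_⟩
  have h1 : surv S t v ≤ (1 - (1/4:ℝ)^(3*n))^k :=
    le_trans (surv_anti hn S ht v) (surv_pow hn S hS k v)
  have h2 : 0 ≤ surv S t v := surv_nonneg _ _ _
  rw [Real.dist_eq, sub_zero, abs_of_nonneg h2]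
  linarith
/-- The `t`-th term of the exit probability series. -/
noncomputable def eterm (S : Set (V n)) (t : ℕ) (v w : V n) : ℝ :=
  ∑ q : Fin (t + 2) → V n,
    if q 0 = v ∧ (∀ i : Fin (t + 1), q i.castSucc ∈ S) ∧
        q (Fin.last (t + 1)) = w ∧ w ∉ S then
      ∏ i : Fin (t + 1), step n (q i.castSucc) (q i.succ)
    else 0

lemma exitProb_eq (S : Set (V n)) (v w : V n) (hv : v ∈ S) :
    exitProb n S v w = ∑' t, eterm S t v w := by
  rw [exitProb, if_pos hv]
  rfl

lemma eterm_nonneg (S : Set (V n)) (t : ℕ) (v w : V n) : 0 ≤ eterm S t v w := by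
  refine Finset.sum_nonneg fun q _ => ?_
  split_ifs
  · exact Finset.prod_nonneg fun i _ => step_nonneg _ _
  · exact le_refl 0

/-- The equivalence appending a last vertex to a path. -/
noncomputable def snocEquiv (t : ℕ) : ((Fin (t + 1) → V n) × V n) ≃ (Fin (t + 2) → V n) where
  toFun p := Fin.snoc p.1 p.2
  invFun q := (fun i => q i.castSucc, q (Fin.last (t + 1)))
  left_inv p := by
    refine Prod.ext ?_ ?_
    · funext i
      simpa using Fin.snoc_castSucc p.1 p.2 i
    · simpa using Fin.snoc_last p.1 p.2
  right_inv q := by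
    funext i
    refine Fin.lastCases ?_ (fun j => ?_) i
    · exact Fin.snoc_last _ _
    · exact Fin.snoc_castSucc _ _ j

lemma sum_eterm (hn : 1 ≤ n) (S : Set (V n)) (t : ℕ) (v : V n) :
    ∑ w : V n, eterm S t v w = surv S t v - surv S (t + 1) v := by
  unfold eterm
  rw [Finset.sum_comm]
  have collapse : ∀ q : Fin (t + 2) → V n,
      (∑ w : V n, if q 0 = v ∧ (∀ i : Fin (t + 1), q i.castSucc ∈ S) ∧
          q (Fin.last (t + 1)) = w ∧ w ∉ S then
        ∏ i : Fin (t + 1), step n (q i.castSucc) (q i.succ) else 0)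
      = (if q 0 = v ∧ (∀ i : Fin (t + 1), q i.castSucc ∈ S) ∧ q (Fin.last (t + 1)) ∉ S then
        ∏ i : Fin (t + 1), step n (q i.castSucc) (q i.succ) else 0) := by
    intro q
    have hw : ∀ w : V n, (if q 0 = v ∧ (∀ i : Fin (t + 1), q i.castSucc ∈ S) ∧
          q (Fin.last (t + 1)) = w ∧ w ∉ S then
        ∏ i : Fin (t + 1), step n (q i.castSucc) (q i.succ) else 0)
        = (if q (Fin.last (t + 1)) = w then
            (if q 0 = v ∧ (∀ i : Fin (t + 1), q i.castSucc ∈ S) ∧ w ∉ S then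
              ∏ i : Fin (t + 1), step n (q i.castSucc) (q i.succ) else 0) else 0) := by
      intro w; split_ifs <;> tauto
    rw [Finset.sum_congr rfl fun w _ => hw w, Finset.sum_ite_eq]
    simp only [Finset.mem_univ, if_true]
  rw [Finset.sum_congr rfl fun q _ => collapse q]
  have split : ∀ q : Fin (t + 2) → V n,
      (if q 0 = v ∧ (∀ i : Fin (t + 1), q i.castSucc ∈ S) ∧ q (Fin.last (t + 1)) ∉ S then
        ∏ i : Fin (t + 1), step n (q i.castSucc) (q i.succ) else 0)
      = (if q 0 = v ∧ (∀ i : Fin (t + 1), q i.castSucc ∈ S) then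
          ∏ i : Fin (t + 1), step n (q i.castSucc) (q i.succ) else 0)
        - (if q 0 = v ∧ (∀ i : Fin (t + 1), q i.castSucc ∈ S) ∧ q (Fin.last (t + 1)) ∈ S then
          ∏ i : Fin (t + 1), step n (q i.castSucc) (q i.succ) else 0) := by
    intro q
    by_cases h1 : q 0 = v ∧ (∀ i : Fin (t + 1), q i.castSucc ∈ S)
    · by_cases h2 : q (Fin.last (t + 1)) ∈ S
      · rw [if_neg (by tauto), if_pos h1, if_pos (by tauto)]; ring
      · rw [if_pos (by tauto), if_pos h1, if_neg (by tauto)]; ring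
    · rw [if_neg (by tauto), if_neg (by tauto), if_neg (by tauto)]; ring
  rw [Finset.sum_congr rfl fun q _ => split q, Finset.sum_sub_distrib]
  have hB : surv S (t + 1) v = ∑ q : Fin (t + 2) → V n,
      (if q 0 = v ∧ (∀ i : Fin (t + 1), q i.castSucc ∈ S) ∧ q (Fin.last (t + 1)) ∈ S then
        ∏ i : Fin (t + 1), step n (q i.castSucc) (q i.succ) else 0) := by
    show (∑ q : Fin (t + 2) → V n, if q 0 = v ∧ (∀ i : Fin (t + 2), q i ∈ S) then
        ∏ i : Fin (t + 1), step n (q i.castSucc) (q i.succ) else 0) = _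
    refine Finset.sum_congr rfl fun q _ => ?_
    refine if_congr (and_congr_right fun _ => ?_) rfl rfl
    constructor
    · intro h
      exact ⟨fun i => h _, h _⟩
    · rintro ⟨h, hl⟩ i
      exact Fin.lastCases hl (fun j => h j) i
  have hA : surv S t v = ∑ q : Fin (t + 2) → V n,
      (if q 0 = v ∧ (∀ i : Fin (t + 1), q i.castSucc ∈ S) then
        ∏ i : Fin (t + 1), step n (q i.castSucc) (q i.succ) else 0) := by
    rw [← Equiv.sum_comp (snocEquiv t) (fun q : Fin (t + 2) → V n =>
      if q 0 = v ∧ (∀ i : Fin (t + 1), q i.castSucc ∈ S) then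
        ∏ i : Fin (t + 1), step n (q i.castSucc) (q i.succ) else 0), Fintype.sum_prod_type]
    have key : ∀ (q' : Fin (t + 1) → V n) (w' : V n),
        (if (snocEquiv t (q', w')) 0 = v ∧
            (∀ i : Fin (t + 1), (snocEquiv t (q', w')) i.castSucc ∈ S) then
          ∏ i : Fin (t + 1), step n ((snocEquiv t (q', w')) i.castSucc)
            ((snocEquiv t (q', w')) i.succ) else 0)
        = (if q' 0 = v ∧ (∀ i : Fin (t + 1), q' i ∈ S) then
            (∏ i : Fin t, step n (q' i.castSucc) (q' i.succ)) * step n (q' (Fin.last t)) w'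
          else 0) := by
      intro q' w'
      show (if (Fin.snoc q' w' : Fin (t + 2) → V n) 0 = v ∧
          (∀ i : Fin (t + 1), (Fin.snoc q' w' : Fin (t + 2) → V n) i.castSucc ∈ S) then
        ∏ i : Fin (t + 1), step n ((Fin.snoc q' w' : Fin (t + 2) → V n) i.castSucc)
          ((Fin.snoc q' w' : Fin (t + 2) → V n) i.succ) else 0) = _
      have h0 : (Fin.snoc q' w' : Fin (t + 2) → V n) 0 = q' 0 := by
        have h00 : ((0 : Fin (t + 2))) = Fin.castSucc (0 : Fin (t + 1)) := rfl
        rw [h00, Fin.snoc_castSucc]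
      have hC : (∀ i : Fin (t + 1), (Fin.snoc q' w' : Fin (t + 2) → V n) i.castSucc ∈ S)
          ↔ (∀ i : Fin (t + 1), q' i ∈ S) := by
        simp [Fin.snoc_castSucc]
      have hP : (∏ i : Fin (t + 1), step n ((Fin.snoc q' w' : Fin (t + 2) → V n) i.castSucc)
            ((Fin.snoc q' w' : Fin (t + 2) → V n) i.succ))
          = (∏ i : Fin t, step n (q' i.castSucc) (q' i.succ)) * step n (q' (Fin.last t)) w' := by
        rw [Fin.prod_univ_castSucc]
        refine congrArg₂ (· * ·) ?_ ?_
        · refine Finset.prod_congr rfl fun i _ => ?_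
          rw [Fin.snoc_castSucc, Fin.succ_castSucc, Fin.snoc_castSucc]
        · rw [Fin.snoc_castSucc, Fin.succ_last, Fin.snoc_last]
      simp only [h0, hC, hP]
    rw [Finset.sum_congr rfl fun q' _ => Finset.sum_congr rfl fun w' _ => key q' w']
    show surv S t v = _
    unfold surv
    refine Finset.sum_congr rfl fun q' _ => ?_
    by_cases hq : q' 0 = v ∧ (∀ i : Fin (t + 1), q' i ∈ S)
    · rw [if_pos hq]
      rw [Finset.sum_congr rfl fun w' _ => if_pos hq, ← Finset.mul_sum, step_rowsum hn, mul_one]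
    · rw [if_neg hq]
      rw [Finset.sum_congr rfl fun w' _ => if_neg hq]
      simp
  rw [← hA, ← hB]

lemma eterm_le (hn : 1 ≤ n) (S : Set (V n)) (t : ℕ) (v w : V n) :
    eterm S t v w ≤ surv S t v - surv S (t + 1) v := by
  rw [← sum_eterm hn S t v]
  exact Finset.single_le_sum (fun w' _ => eterm_nonneg S t v w') (Finset.mem_univ w)

lemma summable_diff (hn : 1 ≤ n) (S : Set (V n)) (v : V n) :
    Summable (fun t => surv S t v - surv S (t + 1) v) := by
  refine summable_of_sum_range_le (c := 1) (fun t => ?_) (fun T => ?_)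
  · have := surv_succ_le hn S t v
    linarith
  · rw [Finset.sum_range_sub' (fun t => surv S t v) T]
    have h1 := surv_le_one hn S 0 v
    have h2 := surv_nonneg S T v
    linarith

lemma summable_eterm (hn : 1 ≤ n) (S : Set (V n)) (v w : V n) :
    Summable (fun t => eterm S t v w) :=
  Summable.of_nonneg_of_le (fun t => eterm_nonneg S t v w)
    (fun t => eterm_le hn S t v w) (summable_diff hn S v)

lemma sum_exitProb (hn : 1 ≤ n) (S : Set (V n)) (hS : ∃ z, z ∉ S) (v : V n) :
    ∑ w : V n, exitProb n S v w = 1 := by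
  by_cases hv : v ∈ S
  · rw [Finset.sum_congr rfl fun w _ => exitProb_eq S v w hv]
    rw [← Summable.tsum_finsetSum (fun w _ => summable_eterm hn S v w)]
    rw [tsum_congr (fun t => sum_eterm hn S t v)]
    have hsummable := summable_diff hn S v
    have htendsto : Filter.Tendsto
        (fun T => ∑ t ∈ Finset.range T, (surv S t v - surv S (t + 1) v))
        Filter.atTop (nhds 1) := by
      have heq : ∀ T, ∑ t ∈ Finset.range T, (surv S t v - surv S (t + 1) v)
          = 1 - surv S T v := by
        intro T
        rw [Finset.sum_range_sub' (fun t => surv S t v) T, surv_zero, if_pos hv]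
      have h0 : Filter.Tendsto (fun T : ℕ => 1 - surv S T v) Filter.atTop (nhds (1 - 0)) :=
        Filter.Tendsto.const_sub 1 (surv_tendsto hn S hS v)
      simpa using h0.congr (fun T => (heq T).symm)
    exact tendsto_nhds_unique hsummable.hasSum.tendsto_sum_nat htendsto
  · rw [Finset.sum_congr rfl (fun w _ => by rw [exitProb, if_neg hv])]
    simp [Finset.sum_ite_eq']

lemma exitProb_support (S : Set (V n)) (v w : V n) (h : exitProb n S v w ≠ 0) : w ∉ S := by
  intro hw
  by_cases hv : v ∈ S
  · rw [exitProb_eq S v w hv] at h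
    apply h
    have hz : ∀ t, eterm S t v w = 0 := by
      intro t
      refine Finset.sum_eq_zero fun q _ => ?_
      rw [if_neg (fun hc => hc.2.2.2 hw)]
    rw [tsum_congr hz]
    exact tsum_zero
  · rw [exitProb, if_neg hv] at h
    rcases eq_or_ne w v with rfl | hne
    · exact hv hw
    · rw [if_neg hne] at h
      exact h rfl

lemma exitProb_congr {S T : Set (V n)} (hTS : T ⊆ S)
    (hcl : ∀ a b, a ∈ T → b ∈ S → 0 < edgeCount n a b → b ∈ T)
    {v : V n} (hv : v ∈ S → v ∈ T) (w : V n) :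
    exitProb n S v w = exitProb n T v w := by
  by_cases hvS : v ∈ S
  · have hvT : v ∈ T := hv hvS
    rw [exitProb, exitProb, if_pos hvS, if_pos hvT]
    refine tsum_congr fun t => Finset.sum_congr rfl fun q _ => ?_
    rcases eq_or_ne (∏ i : Fin (t + 1), step n (q i.castSucc) (q i.succ)) 0 with hz | hz
    · rw [hz]
      simp
    · have hstep : ∀ i : Fin (t + 1), 0 < edgeCount n (q i.castSucc) (q i.succ) := by
        intro i
        have hne := Finset.prod_ne_zero_iff.mp hz i (Finset.mem_univ i)
        rw [step] at hne
        have hc : (edgeCount n (q i.castSucc) (q i.succ) : ℝ) ≠ 0 := by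
          intro hcc
          apply hne
          rw [hcc]
          norm_num
        have : edgeCount n (q i.castSucc) (q i.succ) ≠ 0 := by exact_mod_cast hc
        omega
      refine if_congr ⟨?_, ?_⟩ rfl rfl
      · rintro ⟨h0, hS1, hlast, hwS⟩
        have chain : ∀ m : ℕ, ∀ hm : m < t + 1, q ⟨m, by omega⟩ ∈ T := by
          intro m
          induction m with
          | zero =>
              intro _
              exact h0 ▸ hvT
          | succ m ihm =>
              intro hm
              have h1 := ihm (by omega)
              have h2 := hS1 ⟨m + 1, hm⟩
              have h3 := hstep ⟨m, by omega⟩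
              exact hcl _ _ h1 (by simpa using h2) (by simpa using h3)
        refine ⟨h0, fun i => ?_, hlast, fun hwT => hwS (hTS hwT)⟩
        have := chain i.1 i.2
        exact this
      · rintro ⟨h0, hT1, hlast, hwT⟩
        refine ⟨h0, fun i => hTS (hT1 i), hlast, fun hwS => ?_⟩
        apply hwT
        have ha := hT1 (Fin.last t)
        have he := hstep (Fin.last t)
        have hsucc : (Fin.last t).succ = Fin.last (t + 1) := Fin.succ_last t
        rw [hsucc, hlast] at he
        exact hcl _ _ ha hwS he
  · rw [exitProb, exitProb, if_neg hvS, if_neg (fun h => hvS (hTS h))]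
lemma R1_subset (σ : Config n) : R1 n σ ⊆ {v | σ v = true} := by
  rintro v ⟨u, hu0, hub, hrel⟩
  induction hrel with
  | refl => exact hub
  | tail _ h ih => exact h.2

lemma R1_closed (σ : Config n) {a b : V n} (ha : a ∈ R1 n σ) (hb : σ b = true)
    (he : 0 < edgeCount n a b) : b ∈ R1 n σ := by
  obtain ⟨u, h1, h2, h3⟩ := ha
  rcases eq_or_ne a b with rfl | hne
  · exact ⟨u, h1, h2, h3⟩
  · exact ⟨u, h1, h2, h3.tail ⟨⟨hne, he⟩, hb⟩⟩

lemma R2_subset (σ : Config n) : R2 n σ ⊆ {v | σ v = false} := by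
  rintro v ⟨u, hu0, hub, hrel⟩
  induction hrel with
  | refl => exact hub
  | tail _ h ih => exact h.2

lemma R2_closed (σ : Config n) {a b : V n} (ha : a ∈ R2 n σ) (hb : σ b = false)
    (he : 0 < edgeCount n a b) : b ∈ R2 n σ := by
  obtain ⟨u, h1, h2, h3⟩ := ha
  rcases eq_or_ne a b with rfl | hne
  · exact ⟨u, h1, h2, h3⟩
  · exact ⟨u, h1, h2, h3.tail ⟨⟨hne, he⟩, hb⟩⟩

lemma exitProb_R1 (σ : Config n) (x : Fin n) (w : V n) :
    exitProb n (R1 n σ) (bottom n x) w = exitProb n {v | σ v = true} (bottom n x) w :=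
  (exitProb_congr (R1_subset σ) (fun a b ha hb he => R1_closed σ ha hb he)
    (fun hv => ⟨bottom n x, rfl, hv, Relation.ReflTransGen.refl⟩) w).symm

lemma exitProb_R2 (σ : Config n) (x : Fin n) (w : V n) :
    exitProb n (R2 n σ) (top n x) w = exitProb n {v | σ v = false} (top n x) w :=
  (exitProb_congr (R2_subset σ) (fun a b ha hb he => R2_closed σ ha hb he)
    (fun hv => ⟨top n x, rfl, hv, Relation.ReflTransGen.refl⟩) w).symm

lemma height_recolor (σ : Config n) (w : V n) (c : Bool) :
    height n (recolor n σ w c) = height n σ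
      - (if σ w = true then 1 - (w.2.1 : ℝ) / n else 0)
      + (if c = true then 1 - (w.2.1 : ℝ) / n else 0) := by
  unfold height recolor
  rw [← Finset.sum_erase_add _ _ (Finset.mem_univ w),
      ← Finset.sum_erase_add _
        (fun v : V n => if σ v = true then 1 - (v.2.1:ℝ)/n else 0) (Finset.mem_univ w)]
  have herase : (∑ v ∈ Finset.univ.erase w,
      (if (if v = w then c else σ v) = true then 1 - (v.2.1:ℝ)/n else 0))
      = ∑ v ∈ Finset.univ.erase w, (if σ v = true then 1 - (v.2.1:ℝ)/n else 0) := by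
    refine Finset.sum_congr rfl fun v hv => ?_
    rw [if_neg (Finset.mem_erase.mp hv).1]
  rw [herase]
  have hw : (if w = w then c else σ w) = c := if_pos rfl
  rw [hw]
  ring

lemma drift_eq (hn : 2 ≤ n) (σ : Config n) :
    drift n σ =
      (1 / (n : ℝ)) * (∑ w : V n, blueHalf n σ w *
          ∑ x : Fin n, Hfun n (R2 n (recolor n σ w true)) (top n x)) -
      (1 / (n : ℝ)) * ∑ x : Fin n, Hfun n (R1 n σ) (bottom n x) := by
  have hn1 : 1 ≤ n := by omega
  -- Step 1: collapse the sum over σ'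
  have hdrift : drift n σ = ∑ w : V n, ∑ w' : V n,
      blueHalf n σ w * redHalf n (recolor n σ w true) w' *
        (height n (recolor n (recolor n σ w true) w' false) - height n σ) := by
    unfold drift K
    have h1 : ∀ σ' : Config n, (∑ w : V n, ∑ w' : V n,
        if σ' = recolor n (recolor n σ w true) w' false then
          blueHalf n σ w * redHalf n (recolor n σ w true) w' else 0) *
        (height n σ' - height n σ)
        = ∑ w : V n, ∑ w' : V n,
          (if σ' = recolor n (recolor n σ w true) w' false then
            blueHalf n σ w * redHalf n (recolor n σ w true) w' *
              (height n σ' - height n σ) else 0) := by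
      intro σ'
      rw [Finset.sum_mul]
      refine Finset.sum_congr rfl fun w _ => ?_
      rw [Finset.sum_mul]
      refine Finset.sum_congr rfl fun w' _ => ?_
      rw [ite_mul, zero_mul]
    rw [Finset.sum_congr rfl fun σ' _ => h1 σ', Finset.sum_comm]
    refine Finset.sum_congr rfl fun w _ => ?_
    rw [Finset.sum_comm]
    refine Finset.sum_congr rfl fun w' _ => ?_
    rw [Finset.sum_ite_eq' Finset.univ (recolor n (recolor n σ w true) w' false)
      (fun σ' => blueHalf n σ w * redHalf n (recolor n σ w true) w' *
        (height n σ' - height n σ))]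
    simp only [Finset.mem_univ, if_true]
  -- Step 2: per-w inner reduction
  have hinner : ∀ w : V n, (∑ w' : V n,
      blueHalf n σ w * redHalf n (recolor n σ w true) w' *
        (height n (recolor n (recolor n σ w true) w' false) - height n σ))
      = blueHalf n σ w *
          (∑ w' : V n, redHalf n (recolor n σ w true) w' * ((w'.2.1:ℝ)/n))
        - blueHalf n σ w * ((w.2.1:ℝ)/n) := by
    intro w
    by_cases hb : blueHalf n σ w = 0
    · simp [hb]
    · have hσw : σ w = false := by
        by_contra hww
        have hwT : w ∈ {v : V n | σ v = true} := by
          simp only [Set.mem_setOf_eq]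
          cases h : σ w
          · exact absurd h hww
          · rfl
        apply hb
        have hzero : ∀ x : Fin n, exitProb n {v : V n | σ v = true} (bottom n x) w = 0 := by
          intro x
          by_contra hne
          exact (exitProb_support _ _ _ hne) hwT
        unfold blueHalf
        rw [Finset.sum_congr rfl fun x _ => hzero x, Finset.sum_const_zero, mul_zero]
      have hτw : recolor n σ w true w = true := by
        unfold recolor
        rw [if_pos rfl]
      have hhole : ∃ z, z ∉ {v : V n | recolor n σ w true v = false} :=
        ⟨w, by simp [hτw]⟩
      have hrsum : ∑ w' : V n, redHalf n (recolor n σ w true) w' = 1 := by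
        unfold redHalf
        calc ∑ w' : V n, (1/(n:ℝ)) *
              ∑ x : Fin n, exitProb n {v | recolor n σ w true v = false} (top n x) w'
            = (1/(n:ℝ)) * ∑ x : Fin n,
              ∑ w' : V n, exitProb n {v | recolor n σ w true v = false} (top n x) w' := by
              rw [← Finset.mul_sum, Finset.sum_comm]
          _ = (1/(n:ℝ)) * ∑ x : Fin n, (1:ℝ) :=
              congrArg _ (Finset.sum_congr rfl fun x _ =>
                sum_exitProb hn1 _ hhole (top n x))
          _ = 1 := by
              rw [Finset.sum_const, Finset.card_univ, Fintype.card_fin, nsmul_eq_mul, mul_one]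
              field_simp
      have hterm : ∀ w' : V n, blueHalf n σ w * redHalf n (recolor n σ w true) w' *
          (height n (recolor n (recolor n σ w true) w' false) - height n σ)
          = blueHalf n σ w * redHalf n (recolor n σ w true) w' *
              ((w'.2.1:ℝ)/n - (w.2.1:ℝ)/n) := by
        intro w'
        by_cases hr : redHalf n (recolor n σ w true) w' = 0
        · rw [hr]; ring
        · have hτw' : recolor n σ w true w' = true := by
            by_contra hcon
            have hwF : w' ∈ {v : V n | recolor n σ w true v = false} := by
              simp only [Set.mem_setOf_eq]
              cases h : recolor n σ w true w'
              · rfl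
              · exact absurd h hcon
            apply hr
            have hzero : ∀ x : Fin n,
                exitProb n {v : V n | recolor n σ w true v = false} (top n x) w' = 0 := by
              intro x
              by_contra hne
              exact (exitProb_support _ _ _ hne) hwF
            unfold redHalf
            rw [Finset.sum_congr rfl fun x _ => hzero x, Finset.sum_const_zero, mul_zero]
          rw [height_recolor (recolor n σ w true) w' false, height_recolor σ w true,
            hσw, hτw']
          simp only [Bool.false_eq_true, if_false, reduceIte]
          ring
      rw [Finset.sum_congr rfl fun w' _ => hterm w']
      have expand : ∀ w' : V n, blueHalf n σ w * redHalf n (recolor n σ w true) w' *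
          ((w'.2.1:ℝ)/n - (w.2.1:ℝ)/n)
          = blueHalf n σ w * (redHalf n (recolor n σ w true) w' * ((w'.2.1:ℝ)/n))
            - blueHalf n σ w * ((w.2.1:ℝ)/n) * redHalf n (recolor n σ w true) w' := by
        intro w'; ring
      rw [Finset.sum_congr rfl fun w' _ => expand w', Finset.sum_sub_distrib,
        ← Finset.mul_sum, ← Finset.mul_sum, hrsum, mul_one]
  -- Step 3: Hfun identifications
  have generic : ∀ E : Fin n → V n → ℝ,
      (1/(n:ℝ)) * ∑ x : Fin n, ∑ u : V n, E x u * ((u.2.1:ℝ)/n)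
      = ∑ u : V n, ((1/(n:ℝ)) * ∑ x : Fin n, E x u) * ((u.2.1:ℝ)/n) := by
    intro E
    calc (1/(n:ℝ)) * ∑ x : Fin n, ∑ u : V n, E x u * ((u.2.1:ℝ)/n)
        = (1/(n:ℝ)) * ∑ u : V n, ∑ x : Fin n, E x u * ((u.2.1:ℝ)/n) := by
          rw [Finset.sum_comm]
      _ = ∑ u : V n, (1/(n:ℝ)) * ∑ x : Fin n, E x u * ((u.2.1:ℝ)/n) :=
          Finset.mul_sum _ _ _
      _ = ∑ u : V n, ((1/(n:ℝ)) * ∑ x : Fin n, E x u) * ((u.2.1:ℝ)/n) := by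
          refine Finset.sum_congr rfl fun u _ => ?_
          rw [← Finset.sum_mul]
          ring
  have hHfun1 : (1/(n:ℝ)) * ∑ x : Fin n, Hfun n (R1 n σ) (bottom n x)
      = ∑ u : V n, blueHalf n σ u * ((u.2.1:ℝ)/n) := by
    unfold Hfun
    rw [Finset.sum_congr rfl fun x _ => Finset.sum_congr rfl fun u _ =>
      (by rw [exitProb_R1 σ x u] :
        exitProb n (R1 n σ) (bottom n x) u * ((u.2.1:ℝ)/n)
        = exitProb n {v | σ v = true} (bottom n x) u * ((u.2.1:ℝ)/n))]
    rw [generic (fun x u => exitProb n {v | σ v = true} (bottom n x) u)]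
    rfl
  have hHfun2 : ∀ w : V n,
      (1/(n:ℝ)) * ∑ x : Fin n, Hfun n (R2 n (recolor n σ w true)) (top n x)
      = ∑ w' : V n, redHalf n (recolor n σ w true) w' * ((w'.2.1:ℝ)/n) := by
    intro w
    unfold Hfun
    rw [Finset.sum_congr rfl fun x _ => Finset.sum_congr rfl fun u _ =>
      (by rw [exitProb_R2 (recolor n σ w true) x u] :
        exitProb n (R2 n (recolor n σ w true)) (top n x) u * ((u.2.1:ℝ)/n)
        = exitProb n {v | recolor n σ w true v = false} (top n x) u * ((u.2.1:ℝ)/n))]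
    rw [generic (fun x u => exitProb n {v | recolor n σ w true v = false} (top n x) u)]
    rfl
  rw [hdrift, Finset.sum_congr rfl fun w _ => hinner w, Finset.sum_sub_distrib]
  rw [← hHfun1]
  congr 1
  rw [Finset.mul_sum]
  refine Finset.sum_congr rfl fun w _ => ?_
  rw [← hHfun2 w]
  ring

end CE

/-- Lemma 4.5.  For every `σ ∈ Ω`,
`E(h(σ₁) − h(σ₀) ∣ σ₀ = σ)
  = (1/n)·E_{σ₀}[Σ_{w ∈ C_n×{1}} H_{R₂(σ_{1/2})}(w)]
    − (1/n)·Σ_{v ∈ C_n×{0}} H_{R₁(σ₀)}(v)`;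
the expectation over the intermediate state `σ_{1/2}` is the sum over the
site `w` converted by the blue walker, weighted by `blueHalf`. -/
theorem height_drift_identity (α : ℝ) (hα : 0 < α ∧ α < 1)
    (n : ℕ) (hn : 2 ≤ n) (σ : CE.Config n) (hσ : CE.memOmega α n σ) :
    CE.drift n σ =
      (1 / (n : ℝ)) * (∑ w : CE.V n, CE.blueHalf n σ w *
          ∑ x : Fin n, CE.Hfun n (CE.R2 n (CE.recolor n σ w true)) (CE.top n x)) -
      (1 / (n : ℝ)) * ∑ x : Fin n, CE.Hfun n (CE.R1 n σ) (CE.bottom n x) := by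
  exact CE.drift_eq hn σ
end
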